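/- arXiv:0911.1933 — 11 statements merged into one kernel-verified Lean document; each statement's English description precedes it below -/
import Mathlib

section
/- For a real number r and integer n ≥ 2, with f_n(x) = (rx - x²)ⁿ/n! and I_n = ∫₀ʳ f_n(x) sin x dx, the recurrence I_n = (4n-2)·I_{n-1} - r²·I_{n-2} holds. -/
/-!
With `g x = r x - x²` one has `g' = r - 2x`, `g'' = -2` and `g'² = r² - 4g`, so
`d/dx (gⁿ⁺¹/(n+1)!) = gⁿ/n! · g'`. Differentiating
`u = f_{n+1} g' sin - f_{n+2} cos` therefore gives exactly
`(r² f_n - (4n+6) f_{n+1} + f_{n+2}) sin`, and `u` vanishes at both ends `0` and `r`,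
the roots of `g`.
-/

open Real intervalIntegral

noncomputable section

namespace Niven

def poly (r : ℝ) (n : ℕ) (x : ℝ) : ℝ := (r * x - x ^ 2) ^ n / (n.factorial : ℝ)

def integral (r : ℝ) (n : ℕ) : ℝ := ∫ x in (0 : ℝ)..r, poly r n x * sin x

variable (r : ℝ)

@[fun_prop]
lemma continuous_poly (n : ℕ) : Continuous (poly r n) := by
  unfold poly; fun_prop

lemma poly_succ_zero (n : ℕ) : poly r (n + 1) 0 = 0 := by
  simp [poly]

lemma poly_succ_self (n : ℕ) : poly r (n + 1) r = 0 := by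
  simp [poly, ← sq]

lemma mul_poly (n : ℕ) (x : ℝ) :
    (r * x - x ^ 2) * poly r n x = ((n : ℝ) + 1) * poly r (n + 1) x := by
  have : (n.factorial : ℝ) ≠ 0 := by positivity
  simp only [poly, Nat.factorial_succ, Nat.cast_mul, Nat.cast_succ]
  field_simp
  ring

lemma hasDerivAt_poly_succ (n : ℕ) (x : ℝ) :
    HasDerivAt (poly r (n + 1)) (poly r n x * (r - 2 * x)) x := by
  have hg : HasDerivAt (fun x => r * x - x ^ 2) (r - 2 * x) x :=
    (((hasDerivAt_id x).const_mul r).sub (hasDerivAt_pow 2 x)).congr_deriv (by simp)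
  refine ((hg.pow (n + 1)).div_const ((n + 1).factorial : ℝ)).congr_deriv ?_
  have : (n.factorial : ℝ) ≠ 0 := by positivity
  simp only [poly, Nat.factorial_succ, Nat.cast_mul, Nat.cast_succ, Nat.add_sub_cancel]
  field_simp

lemma hasDerivAt_antideriv (n : ℕ) (x : ℝ) :
    HasDerivAt (fun x => poly r (n + 1) x * (r - 2 * x) * sin x - poly r (n + 2) x * cos x)
      ((r ^ 2 * poly r n x - (4 * n + 6) * poly r (n + 1) x + poly r (n + 2) x) * sin x) x := by
  have hg' : HasDerivAt (fun x => r - 2 * x) (-2) x :=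
    ((hasDerivAt_const x r).sub ((hasDerivAt_id x).const_mul 2)).congr_deriv (by simp)
  refine ((((hasDerivAt_poly_succ r n x).mul hg').mul (hasDerivAt_sin x)).sub
    ((hasDerivAt_poly_succ r (n + 1) x).mul (hasDerivAt_cos x))).congr_deriv ?_
  -- `g'² = r² - 4g`, after which `mul_poly` trades `g · f_n` for `(n+1) f_{n+1}`
  have hsq : poly r n x * (r - 2 * x) * (r - 2 * x)
      = r ^ 2 * poly r n x - 4 * ((r * x - x ^ 2) * poly r n x) := by ring
  simp only [Pi.mul_apply]
  rw [hsq, mul_poly]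
  ring

lemma integral_recurrence_combination (n : ℕ) :
    ∫ x in (0 : ℝ)..r,
      (r ^ 2 * poly r n x - (4 * n + 6) * poly r (n + 1) x + poly r (n + 2) x) * sin x = 0 := by
  rw [integral_eq_sub_of_hasDerivAt (fun x _ => hasDerivAt_antideriv r n x)
    (Continuous.intervalIntegrable (by fun_prop) _ _)]
  simp [poly_succ_zero, poly_succ_self]

lemma intervalIntegrable_poly_mul_sin (n : ℕ) :
    IntervalIntegrable (fun x => poly r n x * sin x) MeasureTheory.volume 0 r :=
  Continuous.intervalIntegrable (by fun_prop) _ _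

theorem integral_add_two (n : ℕ) :
    integral r (n + 2) = (4 * n + 6) * integral r (n + 1) - r ^ 2 * integral r n := by
  have h := integral_recurrence_combination r n
  have hsplit : ∀ x, (r ^ 2 * poly r n x - (4 * n + 6) * poly r (n + 1) x + poly r (n + 2) x) * sin x
      = r ^ 2 * (poly r n x * sin x) - (4 * n + 6) * (poly r (n + 1) x * sin x)
        + poly r (n + 2) x * sin x := fun x => by ring
  simp_rw [hsplit] at h
  rw [integral_add (((intervalIntegrable_poly_mul_sin r n).const_mul _).sub
      ((intervalIntegrable_poly_mul_sin r (n + 1)).const_mul _))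
      (intervalIntegrable_poly_mul_sin r (n + 2)),
    integral_sub ((intervalIntegrable_poly_mul_sin r n).const_mul _)
      ((intervalIntegrable_poly_mul_sin r (n + 1)).const_mul _),
    integral_const_mul, integral_const_mul] at h
  unfold integral
  linarith

end Niven

end

theorem stmt_0 (r : ℝ) (I : ℕ → ℝ)
    (hI : ∀ n : ℕ, I n = ∫ x in (0:ℝ)..r, (r * x - x ^ 2) ^ n / (n.factorial : ℝ) * Real.sin x)
    (n : ℕ) (hn : 2 ≤ n) :
    I n = (4 * (n : ℝ) - 2) * I (n - 1) - r ^ 2 * I (n - 2) := by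
  obtain ⟨m, rfl⟩ : ∃ m, n = m + 2 := ⟨n - 2, by omega⟩
  obtain rfl : I = Niven.integral r := funext hI
  rw [Nat.add_sub_cancel, show m + 2 - 1 = m + 1 from rfl, Niven.integral_add_two]
  push_cast
  ring
end

section
/- If r = a/b with a an integer and b a positive integer, then bⁿ·I_n → 0 as n → ∞, where I_n = ∫₀ʳ (rx - x²)ⁿ/n! · sin x dx. -/
open Filter Topology Nat

/-! Between `0` and `r` the factor `r x - x²` stays in `[0, r²/4]`, so `|I n| ≤ (r²/4)ⁿ / n! · |r|`,
and `bⁿ` times this tends to `0` because factorials outgrow geometric sequences. -/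

lemma abs_mul_sub_sq_le_of_mem_uIcc {r x : ℝ} (hx : x ∈ Set.uIcc 0 r) :
    |r * x - x ^ 2| ≤ r ^ 2 / 4 := by
  have hnonneg : 0 ≤ r * x - x ^ 2 := by
    rcases Set.mem_uIcc.mp hx with ⟨h0, hr⟩ | ⟨hr, h0⟩ <;> nlinarith
  rw [abs_of_nonneg hnonneg]
  nlinarith [sq_nonneg (r - 2 * x)]

lemma norm_integral_pow_div_factorial_mul_sin_le {g : ℝ → ℝ} {M a b : ℝ}
    (hg : ∀ x ∈ Set.uIoc a b, |g x| ≤ M) (n : ℕ) :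
    ‖∫ x in a..b, g x ^ n / n ! * Real.sin x‖ ≤ M ^ n / n ! * |b - a| := by
  refine intervalIntegral.norm_integral_le_of_norm_le_const fun x hx => ?_
  rw [Real.norm_eq_abs, abs_mul, abs_div, abs_pow, Nat.abs_cast]
  calc |g x| ^ n / n ! * |Real.sin x| ≤ |g x| ^ n / n ! * 1 := by
        gcongr
        exact Real.abs_sin_le_one x
    _ ≤ M ^ n / n ! := by rw [mul_one]; gcongr; exact hg x hx

lemma tendsto_pow_mul_of_abs_le_pow_div_factorial {u : ℕ → ℝ} {M C : ℝ}
    (hu : ∀ n, |u n| ≤ M ^ n / n ! * C) (c : ℝ) :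
    Tendsto (fun n => c ^ n * u n) atTop (𝓝 0) := by
  have hlim : Tendsto (fun n : ℕ => C * ((|c| * M) ^ n / n !)) atTop (𝓝 0) := by
    simpa using (FloorSemiring.tendsto_pow_div_factorial_atTop (|c| * M)).const_mul C
  refine squeeze_zero_norm (fun n => ?_) hlim
  calc ‖c ^ n * u n‖ = |c| ^ n * |u n| := by rw [Real.norm_eq_abs, abs_mul, abs_pow]
    _ ≤ |c| ^ n * (M ^ n / n ! * C) := by gcongr; exact hu n
    _ = C * ((|c| * M) ^ n / n !) := by ring

theorem stmt_2_general (b : ℕ) (r : ℝ)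
    (I : ℕ → ℝ)
    (hI : ∀ n : ℕ, I n = ∫ x in (0:ℝ)..r, (r * x - x ^ 2) ^ n / (n.factorial : ℝ) * Real.sin x) :
    Filter.Tendsto (fun n : ℕ => (b : ℝ) ^ n * I n) Filter.atTop (nhds 0) := by
  have hbound : ∀ n, |I n| ≤ (r ^ 2 / 4) ^ n / n ! * |r - 0| := fun n => by
    rw [hI n]
    exact norm_integral_pow_div_factorial_mul_sin_le
      (fun x hx => abs_mul_sub_sq_le_of_mem_uIcc (Set.uIoc_subset_uIcc hx)) n
  exact tendsto_pow_mul_of_abs_le_pow_div_factorial hbound b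

theorem stmt_2 (a : ℤ) (b : ℕ) (hb : 0 < b) (r : ℝ) (hr : r = (a : ℝ) / (b : ℝ))
    (I : ℕ → ℝ)
    (hI : ∀ n : ℕ, I n = ∫ x in (0:ℝ)..r, (r * x - x ^ 2) ^ n / (n.factorial : ℝ) * Real.sin x) :
    Filter.Tendsto (fun n : ℕ => (b : ℝ) ^ n * I n) Filter.atTop (nhds 0) :=
  stmt_2_general b r I hI
end

section
/- For every n ≥ 0 there exist polynomials u_n, v_n with integer coefficients and degrees at most n such that I_n = u_n(r)·(1 - cos r) + v_n(r)·sin r, where I_n = ∫₀ʳ (rx - x²)ⁿ/n! · sin x dx. -/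
/-!
Integrating by parts twice, `∫₀ʳ u sin = u'(r) sin r - ∫₀ʳ u'' sin` whenever `u(0) = u(r) = 0`.
For `u = (r x - x²)ⁿ⁺²/(n+2)!` also `u'` vanishes at `r`, and since `(r - 2x)² = r² - 4(r x - x²)`
one gets the recurrence `I (n+2) = (4n+6) I (n+1) - r² I n`. With `I 0 = 1 - cos r` and
`I 1 = 2 (1 - cos r) - r sin r`, the claim follows by induction: the step multiplies the
coefficient polynomials by an integer or by `X²`.
-/

open MeasureTheory Polynomial Real Set

theorem integral_mul_sin_eq_of_eq_zero {u u' u'' : ℝ → ℝ} {a b : ℝ}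
    (hu : ∀ x ∈ uIcc a b, HasDerivAt u (u' x) x) (hu' : ∀ x ∈ uIcc a b, HasDerivAt u' (u'' x) x)
    (hu'' : IntervalIntegrable u'' volume a b) (ha : u a = 0) (hb : u b = 0) :
    ∫ x in a..b, u x * sin x = u' b * sin b - u' a * sin a - ∫ x in a..b, u'' x * sin x := by
  have hu'_int : IntervalIntegrable u' volume a b :=
    ContinuousOn.intervalIntegrable fun x hx => (hu' x hx).continuousAt.continuousWithinAt
  have hcos : ∀ x ∈ uIcc a b, HasDerivAt (fun x => -cos x) (sin x) x := fun x _ =>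
    (hasDerivAt_cos x).neg.congr_deriv (neg_neg _)
  have first := intervalIntegral.integral_mul_deriv_eq_deriv_mul hu hcos hu'_int
    (continuous_sin.intervalIntegrable a b)
  have second := intervalIntegral.integral_mul_deriv_eq_deriv_mul hu'
    (fun x _ => hasDerivAt_sin x) hu'' (continuous_cos.intervalIntegrable a b)
  simp only [ha, hb, zero_mul, mul_neg, intervalIntegral.integral_neg] at first
  rw [first, second]
  ring

noncomputable def parabolaPow (r : ℝ) (n : ℕ) (x : ℝ) : ℝ :=
  (r * x - x ^ 2) ^ n / (n.factorial : ℝ)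

section parabolaPow

variable (r : ℝ) (n : ℕ)

@[fun_prop] theorem continuous_parabolaPow : Continuous (parabolaPow r n) := by
  unfold parabolaPow; fun_prop

@[simp] theorem parabolaPow_zero (x : ℝ) : parabolaPow r 0 x = 1 := by
  simp [parabolaPow]

@[simp] theorem parabolaPow_succ_apply_zero : parabolaPow r (n + 1) 0 = 0 := by
  simp [parabolaPow]

@[simp] theorem parabolaPow_succ_apply_self : parabolaPow r (n + 1) r = 0 := by
  simp [parabolaPow, sq]

theorem mul_parabolaPow (x : ℝ) :
    (r * x - x ^ 2) * parabolaPow r n x = (n + 1) * parabolaPow r (n + 1) x := by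
  have : (n.factorial : ℝ) ≠ 0 := by positivity
  simp only [parabolaPow, Nat.factorial_succ, Nat.cast_mul, Nat.cast_succ]
  field_simp
  ring

theorem hasDerivAt_parabolaPow_succ (x : ℝ) :
    HasDerivAt (parabolaPow r (n + 1)) ((r - 2 * x) * parabolaPow r n x) x := by
  have hq : HasDerivAt (fun x => r * x - x ^ 2) (r - 2 * x) x :=
    (((hasDerivAt_id x).const_mul r).sub (hasDerivAt_pow 2 x)).congr_deriv (by simp)
  refine ((hq.pow (n + 1)).div_const _).congr_deriv ?_
  have : (n.factorial : ℝ) ≠ 0 := by positivity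
  simp only [parabolaPow, Nat.factorial_succ, Nat.cast_mul, Nat.cast_succ, Nat.add_sub_cancel]
  field_simp

theorem hasDerivAt_mul_parabolaPow_succ (x : ℝ) :
    HasDerivAt (fun x => (r - 2 * x) * parabolaPow r (n + 1) x)
      (r ^ 2 * parabolaPow r n x - (4 * n + 6) * parabolaPow r (n + 1) x) x := by
  have hl : HasDerivAt (fun x => r - 2 * x) (-2) x :=
    (((hasDerivAt_id x).const_mul 2).const_sub r).congr_deriv (by simp)
  refine (hl.mul (hasDerivAt_parabolaPow_succ r n x)).congr_deriv ?_
  -- `(r - 2x)² = r² - 4 (r x - x²)`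
  linear_combination (-4 : ℝ) * mul_parabolaPow r n x

end parabolaPow

section integral

variable (r : ℝ) (n : ℕ)

theorem integral_parabolaPow_one_mul_sin :
    ∫ x in 0..r, parabolaPow r 1 x * sin x = 2 * (1 - cos r) - r * sin r := by
  have hlin : ∀ x, HasDerivAt (fun x => (r - 2 * x) * parabolaPow r 0 x) (-2) x := fun x => by
    simpa using ((hasDerivAt_id x).const_mul 2).const_sub r
  rw [integral_mul_sin_eq_of_eq_zero (fun x _ => hasDerivAt_parabolaPow_succ r 0 x)
    (fun x _ => hlin x) intervalIntegrable_const (parabolaPow_succ_apply_zero r 0)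
    (parabolaPow_succ_apply_self r 0)]
  simp
  ring

theorem integral_parabolaPow_add_two_mul_sin :
    ∫ x in 0..r, parabolaPow r (n + 2) x * sin x =
      (4 * n + 6) * (∫ x in 0..r, parabolaPow r (n + 1) x * sin x)
        - r ^ 2 * ∫ x in 0..r, parabolaPow r n x * sin x := by
  rw [integral_mul_sin_eq_of_eq_zero (fun x _ => hasDerivAt_parabolaPow_succ r (n + 1) x)
    (fun x _ => hasDerivAt_mul_parabolaPow_succ r n x)
    (by apply Continuous.intervalIntegrable; fun_prop)
    (parabolaPow_succ_apply_zero r (n + 1)) (parabolaPow_succ_apply_self r (n + 1))]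
  have hintegrable : ∀ m, IntervalIntegrable (fun x => parabolaPow r m x * sin x) volume 0 r := fun m =>
    ((continuous_parabolaPow r m).mul continuous_sin).intervalIntegrable 0 r
  simp only [parabolaPow_succ_apply_zero, parabolaPow_succ_apply_self, mul_zero, zero_mul, sin_zero,
    sub_zero, zero_sub, sub_mul, mul_assoc]
  rw [intervalIntegral.integral_sub ((hintegrable n).const_mul _) ((hintegrable (n + 1)).const_mul _),
    intervalIntegral.integral_const_mul, intervalIntegral.integral_const_mul]
  ring

end integral

def IsIntPolyComb (r : ℝ) (n : ℕ) (y : ℝ) : Prop :=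
  ∃ u v : ℤ[X], u.natDegree ≤ n ∧ v.natDegree ≤ n ∧
    y = aeval r u * (1 - cos r) + aeval r v * sin r

theorem natDegree_C_mul_sub_X_sq_mul_le {c : ℤ} {p q : ℤ[X]} {n : ℕ} (hp : p.natDegree ≤ n + 1)
    (hq : q.natDegree ≤ n) : (C c * p - X ^ 2 * q).natDegree ≤ n + 2 := by
  refine (natDegree_sub_le _ _).trans (max_le ?_ ?_)
  · exact (natDegree_C_mul_le c p).trans (by omega)
  · exact natDegree_mul_le.trans (by rw [natDegree_X_pow]; omega)

theorem IsIntPolyComb.mul_sub_sq_mul {r y z : ℝ} {n : ℕ} (c : ℤ) (hy : IsIntPolyComb r (n + 1) y)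
    (hz : IsIntPolyComb r n z) : IsIntPolyComb r (n + 2) (c * y - r ^ 2 * z) := by
  obtain ⟨u₁, v₁, hu₁, hv₁, rfl⟩ := hy
  obtain ⟨u₀, v₀, hu₀, hv₀, rfl⟩ := hz
  refine ⟨C c * u₁ - X ^ 2 * u₀, C c * v₁ - X ^ 2 * v₀, natDegree_C_mul_sub_X_sq_mul_le hu₁ hu₀,
    natDegree_C_mul_sub_X_sq_mul_le hv₁ hv₀, ?_⟩
  simp only [map_sub, map_mul, map_pow, aeval_X, eq_intCast, map_intCast]
  ring

theorem stmt_3 (r : ℝ) (I : ℕ → ℝ)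
    (hI : ∀ n : ℕ, I n = ∫ x in (0:ℝ)..r, (r * x - x ^ 2) ^ n / (n.factorial : ℝ) * Real.sin x) :
    ∀ n : ℕ, ∃ u v : Polynomial ℤ, u.natDegree ≤ n ∧ v.natDegree ≤ n ∧
      I n = (Polynomial.aeval r u) * (1 - Real.cos r) + (Polynomial.aeval r v) * Real.sin r := by
  intro n
  suffices key : IsIntPolyComb r n (∫ x in 0..r, parabolaPow r n x * sin x) by
    rw [hI n]; exact key
  induction n using Nat.twoStepInduction with
  | zero => exact ⟨1, 0, by simp, by simp, by simp⟩
  | one =>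
    refine ⟨2, -X, by simp, by simp, ?_⟩
    rw [integral_parabolaPow_one_mul_sin, map_neg, map_ofNat, aeval_X]
    ring
  | more n h₀ h₁ =>
    rw [integral_parabolaPow_add_two_mul_sin]
    exact_mod_cast h₁.mul_sub_sq_mul (4 * n + 6) h₀
end

section
/- If r is a real number with cos r ≠ 1 (equivalently r is not a multiple of 2π), and I_n = ∫₀ʳ (rx - x²)ⁿ/n! · sin x dx, then the sequence (I_n) has infinitely many nonzero terms. -/
/-!
With `uₙ(x) = (r x - x²)ⁿ / n!`, differentiating `(r - 2x) uₙ₊₁ sin x - uₙ₊₂ cos x`, which vanishes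
at `0` and `r`, gives the recurrence `Iₙ₊₂ = (4n + 6) Iₙ₊₁ - r² Iₙ`. As `r ≠ 0`, it runs backwards:
two consecutive zero terms force every earlier term to vanish. So if only finitely many `Iₙ` were
nonzero, we would get `I₀ = 1 - cos r = 0`.
-/

open Real

theorem eq_zero_of_two_term_recurrence_of_eventually_zero {R : Type*} [Ring R] [NoZeroDivisors R]
    {a b : ℕ → R} {c : R} (hc : c ≠ 0) (hrec : ∀ n, a (n + 2) = b n * a (n + 1) + c * a n)
    {N : ℕ} (hN : ∀ n ≥ N, a n = 0) (n : ℕ) : a n = 0 := by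
  induction N with
  | zero => exact hN n n.zero_le
  | succ N ih =>
    refine ih fun m hm => hm.eq_or_lt.elim (fun h => ?_) fun h => hN m h
    have hcN : c * a N = 0 := by
      simpa [hN (N + 1) le_rfl, hN (N + 2) (by omega)] using (hrec N).symm
    exact h ▸ (mul_eq_zero.1 hcN).resolve_left hc

theorem infinite_setOf_ne_zero_of_two_term_recurrence {R : Type*} [Ring R] [NoZeroDivisors R]
    {a b : ℕ → R} {c : R} (hc : c ≠ 0) (hrec : ∀ n, a (n + 2) = b n * a (n + 1) + c * a n)
    {k : ℕ} (hk : a k ≠ 0) : {n | a n ≠ 0}.Infinite := by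
  intro hfin
  obtain ⟨N, hN⟩ := hfin.bddAbove
  refine hk <| eq_zero_of_two_term_recurrence_of_eventually_zero hc hrec (N := N + 1)
    (fun n hn => ?_) k
  by_contra h
  exact absurd (hN h) (by omega)

noncomputable def nivenPoly (r : ℝ) (n : ℕ) (x : ℝ) : ℝ := (r * x - x ^ 2) ^ n / (n.factorial : ℝ)

namespace nivenPoly

variable (r : ℝ) (n : ℕ)

@[fun_prop]
theorem continuous : Continuous (nivenPoly r n) := by
  unfold nivenPoly; fun_prop

theorem hasDerivAt_succ (x : ℝ) :
    HasDerivAt (nivenPoly r (n + 1)) ((r - 2 * x) * nivenPoly r n x) x := by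
  have hp : HasDerivAt (fun x => r * x - x ^ 2) (r - 2 * x) x := by
    simpa using ((hasDerivAt_id x).const_mul r).fun_sub (hasDerivAt_pow 2 x)
  refine ((hp.pow (n + 1)).div_const ((n + 1).factorial : ℝ)).congr_deriv ?_
  simp only [nivenPoly, Nat.factorial_succ, Nat.add_sub_cancel]
  push_cast
  field_simp

theorem mul_eq_succ_mul_succ (x : ℝ) :
    (r * x - x ^ 2) * nivenPoly r n x = (n + 1) * nivenPoly r (n + 1) x := by
  simp only [nivenPoly, Nat.factorial_succ]
  push_cast
  field_simp
  ring

theorem succ_apply_zero : nivenPoly r (n + 1) 0 = 0 := by simp [nivenPoly]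

theorem succ_apply_self : nivenPoly r (n + 1) r = 0 := by simp [nivenPoly, ← sq]

end nivenPoly

theorem integral_nivenPoly_mul_sin_add_two (r : ℝ) (n : ℕ) :
    ∫ x in (0:ℝ)..r, nivenPoly r (n + 2) x * sin x =
      (4 * n + 6) * (∫ x in (0:ℝ)..r, nivenPoly r (n + 1) x * sin x)
        - r ^ 2 * ∫ x in (0:ℝ)..r, nivenPoly r n x * sin x := by
  have hderiv : ∀ x, HasDerivAt
      (fun x => (r - 2 * x) * nivenPoly r (n + 1) x * sin x - nivenPoly r (n + 2) x * cos x)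
      (nivenPoly r (n + 2) x * sin x - (4 * n + 6) * (nivenPoly r (n + 1) x * sin x)
        + r ^ 2 * (nivenPoly r n x * sin x)) x := by
    intro x
    have hlin : HasDerivAt (fun x => r - 2 * x) (-2) x := by
      simpa using ((hasDerivAt_id x).const_mul 2).const_sub r
    refine (((hlin.mul (nivenPoly.hasDerivAt_succ r n x)).mul (hasDerivAt_sin x)).sub
      ((nivenPoly.hasDerivAt_succ r (n + 1) x).mul (hasDerivAt_cos x))).congr_deriv ?_
    simp only [Pi.mul_apply]
    -- `(r - 2x)² = r² - 4 (r x - x²)`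
    linear_combination (-4 * sin x) * nivenPoly.mul_eq_succ_mul_succ r n x
  have hintegrable :
      ∀ m, IntervalIntegrable (fun x => nivenPoly r m x * sin x) MeasureTheory.volume 0 r :=
    fun m => (by fun_prop : Continuous _).intervalIntegrable 0 r
  have hzero := intervalIntegral.integral_eq_sub_of_hasDerivAt (fun x _ => hderiv x)
    ((by fun_prop : Continuous _).intervalIntegrable 0 r)
  simp only [nivenPoly.succ_apply_zero, nivenPoly.succ_apply_self, mul_zero, zero_mul, sub_zero]
    at hzero
  rw [intervalIntegral.integral_add ((hintegrable _).sub ((hintegrable _).const_mul _))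
      ((hintegrable _).const_mul _),
    intervalIntegral.integral_sub (hintegrable _) ((hintegrable _).const_mul _),
    intervalIntegral.integral_const_mul, intervalIntegral.integral_const_mul] at hzero
  linarith

theorem integral_nivenPoly_zero_mul_sin (r : ℝ) :
    ∫ x in (0:ℝ)..r, nivenPoly r 0 x * sin x = 1 - cos r := by
  simp [nivenPoly, integral_sin]

theorem stmt_4 (r : ℝ) (hr : Real.cos r ≠ 1) (I : ℕ → ℝ)
    (hI : ∀ n : ℕ, I n = ∫ x in (0:ℝ)..r, (r * x - x ^ 2) ^ n / (n.factorial : ℝ) * Real.sin x) :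
    {n : ℕ | I n ≠ 0}.Infinite := by
  obtain rfl : I = fun n => ∫ x in (0:ℝ)..r, nivenPoly r n x * sin x := funext hI
  have hr0 : r ≠ 0 := by rintro rfl; exact hr cos_zero
  refine infinite_setOf_ne_zero_of_two_term_recurrence (b := fun n => 4 * n + 6) (c := -r ^ 2)
    (neg_ne_zero.2 (pow_ne_zero 2 hr0)) (fun n => ?_) (k := 0) ?_
  · rw [integral_nivenPoly_mul_sin_add_two]; ring
  · rw [integral_nivenPoly_zero_mul_sin]; exact sub_ne_zero.2 hr.symm
end

section
/- For every nonzero rational number r, tan r is irrational. -/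
/-!
Lambert's theorem, by Niven–Cartwright integrals.
Put `I n θ = ∫_{-1}^{1} (1 - x²)^n cos (x θ) dx`. Integrating by parts twice gives a three-term
recursion in `n`, whence `θ^(2n+1) I n θ = n! (P_n(θ) sin θ + Q_n(θ) cos θ)` with
`P_n, Q_n ∈ ℤ[X]` of degree at most `n`. If `θ = a / b` and `tan θ = c / d`, multiplying by
`b^(2n+1) d` shows that `a^(2n+1) d I n θ` is `n! cos θ` times an integer. As `|I n θ| ≤ 2`,
that integer vanishes for large `n`, so `I n θ = 0` for all large `n`; the recursion then
propagates two consecutive zeros down to `I 0 θ = 2 sin θ / θ = 0`. Irrationality of `π` rules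
out `sin θ = 0` and `cos θ = 0`.
-/

open Real Polynomial
open scoped Nat

lemma sin_ratCast_ne_zero {r : ℚ} (hr : r ≠ 0) : sin r ≠ 0 := by
  intro h
  obtain ⟨k, hk⟩ := sin_eq_zero_iff.mp h
  have hk₀ : k ≠ 0 := by
    rintro rfl
    exact hr (by exact_mod_cast (by simpa using hk.symm : (r : ℝ) = 0))
  exact (irrational_pi.intCast_mul hk₀).ne_rat r hk

lemma cos_ratCast_ne_zero {r : ℚ} (hr : r ≠ 0) : cos r ≠ 0 := by
  intro h
  apply sin_ratCast_ne_zero (mul_ne_zero two_ne_zero hr)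
  rw [Rat.cast_mul, Rat.cast_ofNat, sin_two_mul, h, mul_zero]

lemma exists_den_pow_mul_aeval_eq_intCast (p : ℤ[X]) (r : ℚ) {k : ℕ}
    (hk : p.natDegree ≤ k) : ∃ z : ℤ, (r.den : ℝ) ^ k * aeval (r : ℝ) p = z := by
  refine ⟨r.den ^ (k - p.natDegree) * (p.scaleRoots r.den).eval r.num, ?_⟩
  have h := scaleRoots_eval₂_mul (p := p) (Int.castRingHom ℝ) (r : ℝ) (r.den : ℤ)
  have hnum : Int.castRingHom ℝ r.den * r = Int.castRingHom ℝ r.num := by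
    simp only [eq_intCast, Int.cast_natCast]
    exact_mod_cast Rat.den_mul_eq_num r
  rw [hnum, eval₂_hom, eq_intCast, eq_intCast, Int.cast_natCast] at h
  push_cast
  rw [h, ← mul_assoc, ← pow_add, Nat.sub_add_cancel hk, aeval_def, algebraMap_int_eq]

lemma eventually_mul_pow_lt_mul_factorial (c x : ℝ) {ε : ℝ} (hε : 0 < ε) :
    ∀ᶠ n in Filter.atTop, c * x ^ n < ε * n ! := by
  have := ((FloorSemiring.tendsto_pow_div_factorial_atTop x).const_mul c).eventually_lt_const
    (show c * 0 < ε by simpa)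
  filter_upwards [this] with n hn
  rwa [← mul_div_assoc, div_lt_iff₀ (by positivity)] at hn

namespace Cartwright

open intervalIntegral

noncomputable def I (n : ℕ) (θ : ℝ) : ℝ := ∫ x in (-1)..1, (1 - x ^ 2) ^ n * cos (x * θ)

variable {n : ℕ} {θ : ℝ}

lemma I_zero_mul : I 0 θ * θ = 2 * sin θ := by
  rw [mul_comm, I]
  simp [mul_integral_comp_mul_right, two_mul]

lemma I_succ_mul :
    I (n + 1) θ * θ = 2 * (n + 1) * ∫ x in (-1)..1, x * (1 - x ^ 2) ^ n * sin (x * θ) := by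
  have hu (x : ℝ) : HasDerivAt (fun x : ℝ => (1 - x ^ 2) ^ (n + 1))
      (-(2 * (n + 1) * (x * (1 - x ^ 2) ^ n))) x :=
    (((hasDerivAt_pow 2 x).const_sub 1).fun_pow (n + 1)).congr_deriv (by push_cast; ring)
  have hv (x : ℝ) : HasDerivAt (fun x => sin (x * θ)) (cos (x * θ) * θ) x :=
    (hasDerivAt_mul_const θ).sin
  have parts := integral_mul_deriv_eq_deriv_mul (a := -1) (b := 1) (fun x _ => hu x)
    (fun x _ => hv x)
    (by apply Continuous.intervalIntegrable; fun_prop)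
    (by apply Continuous.intervalIntegrable; fun_prop)
  simp only [neg_mul, integral_neg, one_pow, sub_self, zero_pow (Nat.succ_ne_zero n), zero_mul,
    even_two, Even.neg_pow, zero_sub, neg_neg] at parts
  rw [I, ← integral_mul_const]
  simp only [mul_assoc] at parts ⊢
  rw [parts, integral_const_mul, integral_const_mul]

-- `0 ^ n` is the boundary term; for `n = 0` the truncated `I (n - 1)` carries the factor `0`.
lemma integral_mul_sin_mul :
    (∫ x in (-1)..1, x * (1 - x ^ 2) ^ n * sin (x * θ)) * θ =
      (2 * n + 1) * I n θ - 2 * n * I (n - 1) θ - 2 * 0 ^ n * cos θ := by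
  have hu (x : ℝ) : HasDerivAt (fun x : ℝ => x * (1 - x ^ 2) ^ n)
      ((2 * n + 1) * (1 - x ^ 2) ^ n - 2 * n * (1 - x ^ 2) ^ (n - 1)) x :=
    ((hasDerivAt_id x).fun_mul (((hasDerivAt_pow 2 x).const_sub 1).fun_pow n)).congr_deriv (by
      rcases n with _ | n
      · simp
      · simp only [Nat.add_sub_cancel, pow_succ, id]; push_cast; ring)
  have hv (x : ℝ) : HasDerivAt (fun x => cos (x * θ)) (-sin (x * θ) * θ) x :=
    (hasDerivAt_mul_const θ).cos
  have parts := integral_mul_deriv_eq_deriv_mul (a := -1) (b := 1) (fun x _ => hu x)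
    (fun x _ => hv x)
    (by apply Continuous.intervalIntegrable; fun_prop)
    (by apply Continuous.intervalIntegrable; fun_prop)
  simp only [sub_mul, mul_assoc, neg_mul, mul_neg, integral_neg] at parts
  rw [integral_sub (Continuous.intervalIntegrable (by fun_prop) _ _)
    (Continuous.intervalIntegrable (by fun_prop) _ _), integral_const_mul,
    integral_const_mul] at parts
  rw [I, I, ← integral_mul_const]
  simp only [mul_assoc, one_pow, sub_self, one_mul, even_two, Even.neg_pow, cos_neg,
    sub_neg_eq_add, integral_const_mul] at parts ⊢
  linear_combination -parts

lemma I_add_two_mul_sq :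
    I (n + 2) θ * θ ^ 2 = 2 * (n + 2) * ((2 * n + 3) * I (n + 1) θ - 2 * (n + 1) * I n θ) := by
  have h₁ := I_succ_mul (n := n + 1) (θ := θ)
  have h₂ := integral_mul_sin_mul (n := n + 1) (θ := θ)
  simp only [Nat.add_sub_cancel, zero_pow (Nat.succ_ne_zero n), mul_zero, zero_mul,
    sub_zero] at h₂
  push_cast at h₁ h₂
  linear_combination θ * h₁ + 2 * (n + 2) * h₂

lemma I_one_mul_pow_three : I 1 θ * θ ^ 3 = 4 * sin θ - 4 * θ * cos θ := by
  have h₁ := I_succ_mul (n := 0) (θ := θ)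
  have h₂ := integral_mul_sin_mul (n := 0) (θ := θ)
  simp only [pow_zero, mul_one, CharP.cast_eq_zero, mul_zero, zero_mul, sub_zero] at h₁ h₂
  linear_combination θ ^ 2 * h₁ + 2 * θ * h₂ + 2 * I_zero_mul (θ := θ)

lemma exists_I_mul_pow_eq (θ : ℝ) (n : ℕ) :
    ∃ p q : ℤ[X], p.natDegree ≤ n ∧ q.natDegree ≤ n ∧
      I n θ * θ ^ (2 * n + 1) = n ! * (aeval θ p * sin θ + aeval θ q * cos θ) := by
  induction n using Nat.twoStepInduction with
  | zero => exact ⟨2, 0, by simp, by simp, by simp [map_ofNat, I_zero_mul]⟩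
  | one =>
    refine ⟨4, -4 * X, by simp, by compute_degree!, ?_⟩
    simp only [map_ofNat, map_mul, map_neg, aeval_X]
    linear_combination I_one_mul_pow_three (θ := θ)
  | more n ih₀ ih₁ =>
    obtain ⟨p₀, q₀, hp₀, hq₀, h₀⟩ := ih₀
    obtain ⟨p₁, q₁, hp₁, hq₁, h₁⟩ := ih₁
    have hdeg {f₀ f₁ : ℤ[X]} (h₀ : f₀.natDegree ≤ n) (h₁ : f₁.natDegree ≤ n + 1) :
        (C (2 * (2 * n + 3) : ℤ) * f₁ - C 4 * X ^ 2 * f₀).natDegree ≤ n + 2 := by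
      have h₀' : (C 4 * X ^ 2 * f₀).natDegree ≤ n + 2 :=
        (natDegree_mul_le.trans (add_le_add (natDegree_C_mul_X_pow_le 4 2) h₀)).trans (by omega)
      have h₁' : (C (2 * (2 * n + 3) : ℤ) * f₁).natDegree ≤ n + 2 :=
        (natDegree_C_mul_le _ _).trans (h₁.trans (by omega))
      exact (natDegree_sub_le_of_le h₁' h₀').trans (max_self _).le
    refine ⟨_, _, hdeg hp₀ hp₁, hdeg hq₀ hq₁, ?_⟩
    simp only [map_sub, map_mul, map_add, map_ofNat, map_natCast, aeval_X_pow]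
    push_cast [Nat.factorial_succ] at h₁ ⊢
    linear_combination θ ^ (2 * n + 3) * I_add_two_mul_sq (n := n) (θ := θ) +
      2 * (n + 2) * (2 * n + 3) * h₁ - 4 * (n + 2) * (n + 1) * θ ^ 2 * h₀

lemma abs_I_le (n : ℕ) (θ : ℝ) : |I n θ| ≤ 2 := by
  rw [← Real.norm_eq_abs]
  refine (norm_integral_le_of_norm_le_const fun x hx => ?_).trans
    (show (1 : ℝ) * |1 - (-1)| ≤ 2 by norm_num)
  rw [Set.uIoc_of_le (by norm_num), Set.mem_Ioc] at hx
  rw [Real.norm_eq_abs, abs_mul, abs_pow]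
  refine mul_le_one₀ (pow_le_one₀ (abs_nonneg _) ?_) (abs_nonneg _) (abs_cos_le_one _)
  rw [abs_le]
  constructor <;> nlinarith

lemma I_zero_eq_zero_of_eq_zero_of_succ_eq_zero (h₀ : I n θ = 0) (h₁ : I (n + 1) θ = 0) :
    I 0 θ = 0 := by
  induction n with
  | zero => exact h₀
  | succ n ih =>
    refine ih ?_ h₀
    have h : (2 * (n + 2) * (2 * (n + 1)) : ℝ) * I n θ = 0 := by
      linear_combination I_add_two_mul_sq (n := n) (θ := θ) - θ ^ 2 * h₁ +
        2 * (n + 2) * (2 * n + 3) * h₀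
    exact (mul_eq_zero.mp h).resolve_left (by positivity)

lemma frequently_I_ne_zero (hθ : sin θ ≠ 0) : ∃ᶠ n in Filter.atTop, I n θ ≠ 0 := by
  refine Filter.frequently_atTop.mpr fun N => ?_
  by_contra! h
  have h₀ := I_zero_eq_zero_of_eq_zero_of_succ_eq_zero (h N le_rfl) (h (N + 1) (by omega))
  have h₁ := I_zero_mul (θ := θ)
  rw [h₀, zero_mul] at h₁
  exact hθ (by linarith)

lemma factorial_mul_abs_cos_le {r t : ℚ} (hr : r ≠ 0) (hcos : cos r ≠ 0) (ht : tan r = t)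
    (hI : I n r ≠ 0) : n ! * |cos r| ≤ |I n r| * |(r.num : ℝ)| ^ (2 * n + 1) * t.den := by
  obtain ⟨p, q, hp, hq, hI_eq⟩ := exists_I_mul_pow_eq (r : ℝ) n
  obtain ⟨z₁, hz₁⟩ := exists_den_pow_mul_aeval_eq_intCast p r (k := 2 * n + 1) (by omega)
  obtain ⟨z₂, hz₂⟩ := exists_den_pow_mul_aeval_eq_intCast q r (k := 2 * n + 1) (by omega)
  have hsin : sin r * t.den = cos r * t.num := by
    rw [tan_eq_sin_div_cos, Rat.cast_def t, div_eq_div_iff hcos (by positivity)] at ht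
    linear_combination ht
  have hnum : (r.num : ℝ) = r * r.den := by exact_mod_cast (Rat.mul_den_eq_num r).symm
  set m := z₁ * t.num + z₂ * t.den
  have key : I n r * r.num ^ (2 * n + 1) * t.den = n ! * cos r * m := by
    rw [hnum]
    push_cast [m]
    linear_combination (r.den : ℝ) ^ (2 * n + 1) * t.den * hI_eq + n ! * t.den * sin r * hz₁ +
      n ! * t.den * cos r * hz₂ + n ! * z₁ * hsin
  have hm : m ≠ 0 := by
    rintro hm
    rw [hm, Int.cast_zero, mul_zero] at key
    simp [hI, hr, t.den_ne_zero] at key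
  calc (n ! : ℝ) * |cos r| ≤ n ! * |cos r| * |(m : ℝ)| :=
        le_mul_of_one_le_right (by positivity) (by exact_mod_cast Int.one_le_abs hm)
    _ = |I n r| * |(r.num : ℝ)| ^ (2 * n + 1) * t.den := by
        rw [← abs_pow, ← Nat.abs_cast t.den, ← abs_mul, ← abs_mul, key, abs_mul, abs_mul,
          Nat.abs_cast]

end Cartwright

open Cartwright in
theorem stmt_5 (r : ℚ) (hr : r ≠ 0) : Irrational (Real.tan r) := by
  rintro ⟨t, ht⟩
  have hcos := cos_ratCast_ne_zero hr
  set a : ℝ := |(r.num : ℝ)|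
  have hsmall : ∀ᶠ n in Filter.atTop, 2 * a * t.den * (a ^ 2) ^ n < |cos r| * n ! :=
    eventually_mul_pow_lt_mul_factorial _ _ (abs_pos.mpr hcos)
  obtain ⟨n, hI, hn⟩ :=
    ((frequently_I_ne_zero (sin_ratCast_ne_zero hr)).and_eventually hsmall).exists
  have hbound := calc
    n ! * |cos r| ≤ |I n r| * a ^ (2 * n + 1) * t.den :=
      factorial_mul_abs_cos_le hr hcos ht.symm hI
    _ ≤ 2 * a ^ (2 * n + 1) * t.den := by gcongr; exact abs_I_le n r
    _ = 2 * a * t.den * (a ^ 2) ^ n := by ring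
  linarith
end

section
/- If r is a real number with r² a nonzero rational number, then (tan r)/r is irrational. -/
/-!
Cartwright's integrals `I n θ = ∫ x in -1..1, (1 - x²)ⁿ cos (x θ)` satisfy
`θ² I (n + 2) = 2 (n + 2) (2n + 3) I (n + 1) - 4 (n + 2) (n + 1) I n`, so for `r² = N / D` the
numbers `I n r r²ⁿ⁺¹ Dⁿ / n!` are integer combinations of `sin r` and `r cos r`, while they are
`O(|N|ⁿ / n!)`. A nontrivial integer relation `u sin r + v r cos r = 0` turns them into integer
multiples of the fixed nonzero number `(sin² r + r² cos² r) / (u r cos r - v sin r)`, so they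
vanish for large `n`; running the recursion backwards then gives `sin r = r cos r = 0`, absurd.
Both `tan r = p r` with `p` rational and `cos r = 0` are such relations.
-/

open intervalIntegral Real Filter
open scoped Nat

noncomputable def cartwrightIntegral (n : ℕ) (θ : ℝ) : ℝ :=
  ∫ x in (-1)..1, (1 - x ^ 2) ^ n * cos (x * θ)

lemma sq_mul_integral_mul_cos_add_integral_mul_cos {f f' f'' : ℝ → ℝ} (θ a b : ℝ)
    (hf : ∀ x, HasDerivAt f (f' x) x) (hf' : ∀ x, HasDerivAt f' (f'' x) x)
    (hf'' : Continuous f'') :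
    θ ^ 2 * (∫ x in a..b, f x * cos (x * θ)) + ∫ x in a..b, f'' x * cos (x * θ) =
      (f b * θ * sin (b * θ) + f' b * cos (b * θ)) -
        (f a * θ * sin (a * θ) + f' a * cos (a * θ)) := by
  have hf_cont : Continuous f := continuous_iff_continuousAt.2 fun x => (hf x).continuousAt
  rw [← integral_const_mul, ← integral_add (Continuous.intervalIntegrable (by fun_prop) _ _)
    (Continuous.intervalIntegrable (by fun_prop) _ _)]
  refine integral_eq_sub_of_hasDerivAt
    (f := fun x => f x * θ * sin (x * θ) + f' x * cos (x * θ)) (fun x _ => ?_)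
    (Continuous.intervalIntegrable (by fun_prop) _ _)
  refine ((((hf x).mul_const θ).fun_mul (hasDerivAt_mul_const θ).sin).fun_add
    ((hf' x).fun_mul (hasDerivAt_mul_const θ).cos)).congr_deriv ?_
  ring

namespace cartwrightIntegral

variable {θ : ℝ}

lemma zero_mul_self : cartwrightIntegral 0 θ * θ = 2 * sin θ := by
  rw [mul_comm, cartwrightIntegral]
  simp [mul_integral_comp_mul_right, two_mul]

lemma one_mul_pow_three :
    cartwrightIntegral 1 θ * θ ^ 3 = 4 * sin θ - 4 * θ * cos θ := by
  have key := sq_mul_integral_mul_cos_add_integral_mul_cos (f := fun x => (1 - x ^ 2) ^ 1)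
    (f' := fun x => -2 * x) (f'' := fun x => -2 * (1 - x ^ 2) ^ 0) θ (-1) 1
    (fun x => by simpa using (hasDerivAt_pow 2 x).const_sub 1)
    (fun x => by simpa using (hasDerivAt_id x).const_mul (-2)) (by fun_prop)
  simp only [mul_assoc, integral_const_mul] at key
  rw [← cartwrightIntegral, ← cartwrightIntegral] at key
  have := zero_mul_self (θ := θ)
  norm_num at key
  linear_combination θ * key + 2 * this

lemma integral_const_mul_add_const_mul_mul_cos (a b : ℝ) (m k : ℕ) :
    ∫ x in (-1)..1, (a * (1 - x ^ 2) ^ m + b * (1 - x ^ 2) ^ k) * cos (x * θ) =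
      a * cartwrightIntegral m θ + b * cartwrightIntegral k θ := by
  simp only [add_mul, mul_assoc]
  rw [integral_add (Continuous.intervalIntegrable (by fun_prop) _ _)
    (Continuous.intervalIntegrable (by fun_prop) _ _), integral_const_mul, integral_const_mul]
  rfl

lemma add_two_mul_sq (n : ℕ) :
    cartwrightIntegral (n + 2) θ * θ ^ 2 =
      2 * (n + 2) * (2 * n + 3) * cartwrightIntegral (n + 1) θ -
        4 * (n + 2) * (n + 1) * cartwrightIntegral n θ := by
  have key := sq_mul_integral_mul_cos_add_integral_mul_cos (f := fun x => (1 - x ^ 2) ^ (n + 2))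
    (f' := fun x => -2 * (n + 2) * x * (1 - x ^ 2) ^ (n + 1))
    (f'' := fun x => -2 * (n + 2) * (2 * n + 3) * (1 - x ^ 2) ^ (n + 1) +
      4 * (n + 2) * (n + 1) * (1 - x ^ 2) ^ n) θ (-1) 1
    (fun x => by
      refine (((hasDerivAt_pow 2 x).const_sub 1).fun_pow (n + 2)).congr_deriv ?_
      push_cast; ring)
    (fun x => by
      refine (((hasDerivAt_id' x).const_mul (-2 * (n + 2 : ℝ))).fun_mul
        (((hasDerivAt_pow 2 x).const_sub 1).fun_pow (n + 1))).congr_deriv ?_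
      push_cast; ring)
    (by fun_prop)
  rw [integral_const_mul_add_const_mul_mul_cos, ← cartwrightIntegral] at key
  norm_num at key
  linear_combination key

lemma abs_le_two (n : ℕ) (θ : ℝ) : |cartwrightIntegral n θ| ≤ 2 := by
  rw [← Real.norm_eq_abs]
  refine (norm_integral_le_of_norm_le_const (C := 1) fun x hx => ?_).trans_eq (by norm_num)
  rw [Set.uIoc_of_le (by norm_num), Set.mem_Ioc] at hx
  rw [norm_mul, norm_pow, Real.norm_eq_abs, Real.norm_eq_abs]
  refine mul_le_one₀ (pow_le_one₀ (abs_nonneg _) ?_) (abs_nonneg _) (abs_cos_le_one _)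
  rw [abs_le]
  constructor <;> nlinarith

lemma zero_eq_zero_and_one_eq_zero_of_eq_zero_of_succ_eq_zero {n : ℕ}
    (h : cartwrightIntegral n θ = 0) (h' : cartwrightIntegral (n + 1) θ = 0) :
    cartwrightIntegral 0 θ = 0 ∧ cartwrightIntegral 1 θ = 0 := by
  induction n with
  | zero => exact ⟨h, h'⟩
  | succ n ih =>
    refine ih ?_ h
    have hrec := add_two_mul_sq (θ := θ) n
    rw [h, h'] at hrec
    have : (4 * (n + 2) * (n + 1) : ℝ) ≠ 0 := by positivity
    simpa [this] using hrec

lemma eq_zero_of_eq_zero_of_succ_eq_zero {n : ℕ} (h : cartwrightIntegral n θ = 0)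
    (h' : cartwrightIntegral (n + 1) θ = 0) : θ = 0 := by
  obtain ⟨h₀, h₁⟩ := zero_eq_zero_and_one_eq_zero_of_eq_zero_of_succ_eq_zero h h'
  have hsin : sin θ = 0 := by linear_combination θ * h₀ / 2 - (zero_mul_self (θ := θ)) / 2
  have hcos : θ * cos θ = 0 := by
    linear_combination (one_mul_pow_three (θ := θ)) / 4 - θ ^ 3 * h₁ / 4 + hsin
  by_contra hθ
  have : cos θ = 0 := (mul_eq_zero.1 hcos).resolve_left hθ
  simpa [hsin, this] using sin_sq_add_cos_sq θ

end cartwrightIntegral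

def sinCoeff (D N : ℤ) : ℕ → ℤ
  | 0 => 2
  | 1 => 4 * D
  | n + 2 => 2 * (2 * n + 3) * D * sinCoeff D N (n + 1) - 4 * N * D * sinCoeff D N n

def cosCoeff (D N : ℤ) : ℕ → ℤ
  | 0 => 0
  | 1 => -4 * D
  | n + 2 => 2 * (2 * n + 3) * D * cosCoeff D N (n + 1) - 4 * N * D * cosCoeff D N n

lemma cartwrightIntegral_mul_pow_eq {r : ℝ} {D N : ℤ} (hDN : r ^ 2 * D = N) :
    ∀ n : ℕ, cartwrightIntegral n r * r ^ (2 * n + 1) * D ^ n =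
      n ! * (sinCoeff D N n * sin r + cosCoeff D N n * (r * cos r))
  | 0 => by
    simp [sinCoeff, cosCoeff, cartwrightIntegral.zero_mul_self]
  | 1 => by
    simp only [sinCoeff, cosCoeff]
    push_cast
    linear_combination (D : ℝ) * cartwrightIntegral.one_mul_pow_three (θ := r)
  | n + 2 => by
    calc cartwrightIntegral (n + 2) r * r ^ (2 * (n + 2) + 1) * D ^ (n + 2)
        = cartwrightIntegral (n + 2) r * r ^ 2 * (r ^ (2 * n + 3) * D ^ (n + 2)) := by ring
      _ = 2 * (n + 2) * (2 * n + 3) * D *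
            (cartwrightIntegral (n + 1) r * r ^ (2 * (n + 1) + 1) * D ^ (n + 1)) -
          4 * (n + 2) * (n + 1) * D * (r ^ 2 * D) *
            (cartwrightIntegral n r * r ^ (2 * n + 1) * D ^ n) := by
        rw [cartwrightIntegral.add_two_mul_sq]; ring
      _ = _ := by
        rw [hDN, cartwrightIntegral_mul_pow_eq hDN (n + 1), cartwrightIntegral_mul_pow_eq hDN n]
        simp only [sinCoeff, cosCoeff, Nat.factorial_succ]
        push_cast
        ring

lemma abs_cartwrightIntegral_mul_pow_le (n : ℕ) (r D : ℝ) :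
    |cartwrightIntegral n r * r ^ (2 * n + 1) * D ^ n| ≤ 2 * |r| * |r ^ 2 * D| ^ n := by
  calc |cartwrightIntegral n r * r ^ (2 * n + 1) * D ^ n|
      = |cartwrightIntegral n r| * (|r| * |r ^ 2 * D| ^ n) := by
        simp only [abs_mul, abs_pow]
        ring
    _ ≤ 2 * (|r| * |r ^ 2 * D| ^ n) := by
        gcongr
        exact cartwrightIntegral.abs_le_two n r
    _ = 2 * |r| * |r ^ 2 * D| ^ n := by ring

lemma eventually_eq_zero_of_abs_le_mul_pow_div_factorial {z : ℕ → ℤ} {C x : ℝ}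
    (h : ∀ n, |(z n : ℝ)| ≤ C * (x ^ n / n !)) : ∀ᶠ n in atTop, z n = 0 := by
  have hlim := (FloorSemiring.tendsto_pow_div_factorial_atTop x).const_mul C
  rw [mul_zero] at hlim
  filter_upwards [hlim.eventually_lt_const one_pos] with n hn
  exact Int.abs_lt_one_iff.1 (by exact_mod_cast (h n).trans_lt hn)

lemma sin_sq_add_mul_cos_sq_pos {r : ℝ} (hr : r ≠ 0) : 0 < sin r ^ 2 + (r * cos r) ^ 2 := by
  refine lt_of_le_of_ne (by positivity) fun h0 => ?_
  obtain ⟨hs, hc⟩ := (add_eq_zero_iff_of_nonneg (sq_nonneg _) (sq_nonneg _)).1 h0.symm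
  have hcos : cos r = 0 := (mul_eq_zero.1 (pow_eq_zero_iff two_ne_zero |>.1 hc)).resolve_left hr
  simpa [pow_eq_zero_iff two_ne_zero |>.1 hs, hcos] using sin_sq_add_cos_sq r

-- `(u c - v s)² + (u s + v c)² = (u² + v²) (s² + c²)`
lemma mul_sub_mul_ne_zero_of_mul_add_mul_eq_zero {u v s c : ℝ} (h : u * s + v * c = 0)
    (huv : 0 < u ^ 2 + v ^ 2) (hsc : 0 < s ^ 2 + c ^ 2) : u * c - v * s ≠ 0 := by
  intro h0
  nlinarith [show (u * c - v * s) ^ 2 = (u ^ 2 + v ^ 2) * (s ^ 2 + c ^ 2) by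
    linear_combination (-(u * s + v * c)) * h]

lemma eventually_cartwrightIntegral_eq_zero {r : ℝ} {D N u v : ℤ} (hr : r ≠ 0) (hD : D ≠ 0)
    (hDN : r ^ 2 * D = N) (h : u * sin r + v * (r * cos r) = 0)
    (hw : u * (r * cos r) - v * sin r ≠ 0) :
    ∀ᶠ n in atTop, cartwrightIntegral n r = 0 := by
  have hsc := sin_sq_add_mul_cos_sq_pos hr
  set s := sin r
  set c := r * cos r
  let z n := u * cosCoeff D N n - v * sinCoeff D N n
  have hz (n : ℕ) : n ! * z n * (s ^ 2 + c ^ 2) =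
      cartwrightIntegral n r * r ^ (2 * n + 1) * D ^ n * (u * c - v * s) := by
    rw [cartwrightIntegral_mul_pow_eq hDN]
    push_cast [z]
    linear_combination (n ! * (cosCoeff D N n * s - sinCoeff D N n * c) : ℝ) * h
  have hz_eventually : ∀ᶠ n in atTop, z n = 0 := by
    refine eventually_eq_zero_of_abs_le_mul_pow_div_factorial
      (C := 2 * |r| * |u * c - v * s| / (s ^ 2 + c ^ 2)) (x := |r ^ 2 * D|) fun n => ?_
    have hfac : (0 : ℝ) < n ! := by positivity
    rw [← mul_le_mul_iff_of_pos_right (mul_pos hfac hsc)]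
    calc |(z n : ℝ)| * (n ! * (s ^ 2 + c ^ 2))
        = |cartwrightIntegral n r * r ^ (2 * n + 1) * D ^ n| * |u * c - v * s| := by
          rw [← abs_of_pos (mul_pos hfac hsc), ← abs_mul, ← abs_mul, ← hz n]
          ring_nf
      _ ≤ 2 * |r| * |r ^ 2 * D| ^ n * |u * c - v * s| := by
          gcongr
          exact abs_cartwrightIntegral_mul_pow_le n r D
      _ = _ := by field_simp
  filter_upwards [hz_eventually] with n hn
  simpa [hn, hw, hr, hD] using hz n

theorem eq_zero_of_mul_sin_add_mul_mul_cos_eq_zero {r : ℝ} (hr : r ≠ 0) {q : ℚ}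
    (hrq : r ^ 2 = q) {u v : ℤ} (h : u * sin r + v * (r * cos r) = 0) : u = 0 ∧ v = 0 := by
  by_contra huv
  have huv' : (0 : ℝ) < u ^ 2 + v ^ 2 := by
    rcases not_and_or.1 huv with hu | hv
    · have : (u : ℝ) ≠ 0 := by exact_mod_cast hu
      positivity
    · have : (v : ℝ) ≠ 0 := by exact_mod_cast hv
      positivity
  have hDN : r ^ 2 * (q.den : ℤ) = q.num := by
    rw [hrq]
    exact_mod_cast Rat.mul_den_eq_num q
  have hI := eventually_cartwrightIntegral_eq_zero hr (Int.natCast_ne_zero.2 q.den_ne_zero) hDN h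
    (mul_sub_mul_ne_zero_of_mul_add_mul_eq_zero h huv' (sin_sq_add_mul_cos_sq_pos hr))
  obtain ⟨n, hn, hn'⟩ := (hI.and (tendsto_add_atTop_nat 1 |>.eventually hI)).exists
  exact hr (cartwrightIntegral.eq_zero_of_eq_zero_of_succ_eq_zero hn hn')

theorem stmt_6 (r : ℝ) (q : ℚ) (hq : q ≠ 0) (hr : r ^ 2 = (q : ℝ)) :
    Irrational (Real.tan r / r) := by
  have hr0 : r ≠ 0 := by
    rintro rfl
    exact hq (by exact_mod_cast (by simpa using hr.symm : (q : ℝ) = 0))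
  rintro ⟨p, hp⟩
  by_cases hc : cos r = 0
  -- the junk value `tan r = 0` makes this case the claim that `r ^ 2 ∉ ℚ` when `cos r = 0`
  · exact one_ne_zero (eq_zero_of_mul_sin_add_mul_mul_cos_eq_zero hr0 hr
      (u := 0) (v := 1) (by simp [hc])).2
  · have hrel : ((p.den : ℤ) : ℝ) * sin r + ((-p.num : ℤ) : ℝ) * (r * cos r) = 0 := by
      rw [tan_eq_sin_div_cos, ← Rat.num_div_den p] at hp
      push_cast at hp ⊢
      field_simp at hp
      linear_combination -hp
    exact p.den_ne_zero <| by
      exact_mod_cast (eq_zero_of_mul_sin_add_mul_mul_cos_eq_zero hr0 hr hrel).1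
end

section
/- With f_n(x) = (πx - x²)ⁿ/n! and I_n = ∫₀^π f_n(x) sin x dx, one has I_0 = 2, I_1 = 4, and I_n = (4n-2)I_{n-1} - π²·I_{n-2} for n ≥ 2; consequently every I_n is of the form P(π²) for some polynomial P with integer coefficients. -/
/-!
With `f n x = (π x - x²)ⁿ / n!`, one has `f (n+1)' = (π - 2x) f n`, and since
`(π - 2x)² = π² - 4 (π x - x²)` also `f (n+2)'' = π² f n - (4n + 6) f (n+1)`.
Integrating by parts twice, `∫₀^π (g + g'') sin = g π + g 0`, which vanishes for `g = f (n+2)`;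
this is the recurrence. Integer polynomials in `π²` are closed under the recurrence.
-/

open Real intervalIntegral Polynomial

theorem integral_add_integral_deriv2_mul_sin {f f' f'' : ℝ → ℝ}
    (hf : ∀ x, HasDerivAt f (f' x) x) (hf' : ∀ x, HasDerivAt f' (f'' x) x)
    (hf'' : Continuous f'') :
    (∫ x in (0:ℝ)..π, f x * sin x) + ∫ x in (0:ℝ)..π, f'' x * sin x = f π + f 0 := by
  have hcont : Continuous f := continuous_iff_continuousAt.2 fun x => (hf x).continuousAt
  have hint : ∀ g : ℝ → ℝ, Continuous g →
      IntervalIntegrable (fun x => g x * sin x) MeasureTheory.volume 0 π :=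
    fun g hg => (hg.mul continuous_sin).intervalIntegrable _ _
  have hderiv : ∀ x ∈ Set.uIcc (0:ℝ) π,
      HasDerivAt (fun x => -f x * cos x + f' x * sin x) (f x * sin x + f'' x * sin x) x :=
    fun x _ => (((hf x).neg.mul (hasDerivAt_cos x)).add
      ((hf' x).mul (hasDerivAt_sin x))).congr_deriv (by simp only [Pi.neg_apply]; ring)
  rw [← integral_add (hint f hcont) (hint f'' hf''),
    integral_eq_sub_of_hasDerivAt hderiv ((hint f hcont).add (hint f'' hf''))]
  simp

theorem mem_range_aeval_of_recurrence {A : Type*} [CommRing A] (t : A) (c : ℕ → ℤ) (u : ℕ → A)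
    (h0 : u 0 ∈ (aeval (R := ℤ) t).range) (h1 : u 1 ∈ (aeval (R := ℤ) t).range)
    (hrec : ∀ n, u (n + 2) = c n * u (n + 1) - t * u n) (n : ℕ) :
    u n ∈ (aeval (R := ℤ) t).range := by
  set S := (aeval (R := ℤ) t).range
  have ht : t ∈ S := ⟨X, aeval_X t⟩
  suffices ∀ n, u n ∈ S ∧ u (n + 1) ∈ S from (this n).1
  intro n
  induction n with
  | zero => exact ⟨h0, h1⟩
  | succ n ih =>
    refine ⟨ih.2, ?_⟩
    rw [hrec]
    exact S.sub_mem (S.mul_mem (S.intCast_mem _) ih.2) (S.mul_mem ht ih.1)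

noncomputable def nivenFun (n : ℕ) (x : ℝ) : ℝ := (π * x - x ^ 2) ^ n / n.factorial

theorem continuous_nivenFun (n : ℕ) : Continuous (nivenFun n) := by
  unfold nivenFun
  fun_prop

@[simp] theorem nivenFun_zero (x : ℝ) : nivenFun 0 x = 1 := by simp [nivenFun]

@[simp] theorem nivenFun_succ_zero (n : ℕ) : nivenFun (n + 1) 0 = 0 := by simp [nivenFun]

@[simp] theorem nivenFun_succ_pi (n : ℕ) : nivenFun (n + 1) π = 0 := by simp [nivenFun, ← sq]

theorem mul_nivenFun (n : ℕ) (x : ℝ) :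
    (π * x - x ^ 2) * nivenFun n x = (n + 1) * nivenFun (n + 1) x := by
  simp only [nivenFun, Nat.factorial_succ, Nat.cast_mul, Nat.cast_succ]
  field_simp
  ring

theorem hasDerivAt_nivenFun_succ (n : ℕ) (x : ℝ) :
    HasDerivAt (nivenFun (n + 1)) ((π - 2 * x) * nivenFun n x) x := by
  have hpoly : HasDerivAt (fun x => π * x - x ^ 2) (π - 2 * x) x := by
    simpa using ((hasDerivAt_id x).const_mul π).fun_sub (hasDerivAt_pow 2 x)
  refine ((hpoly.pow (n + 1)).div_const ((n + 1).factorial : ℝ)).congr_deriv ?_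
  simp only [nivenFun, Nat.factorial_succ, Nat.cast_mul, Nat.cast_succ, Nat.add_sub_cancel]
  field_simp

theorem hasDerivAt_pi_sub_two_mul (x : ℝ) : HasDerivAt (fun x => π - 2 * x) (-2) x := by
  simpa using ((hasDerivAt_id x).const_mul 2).const_sub π

theorem hasDerivAt_deriv_nivenFun_succ_succ (n : ℕ) (x : ℝ) :
    HasDerivAt (fun x => (π - 2 * x) * nivenFun (n + 1) x)
      (π ^ 2 * nivenFun n x - (4 * n + 6) * nivenFun (n + 1) x) x := by
  refine ((hasDerivAt_pi_sub_two_mul x).mul (hasDerivAt_nivenFun_succ n x)).congr_deriv ?_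
  have hsq : (π - 2 * x) ^ 2 = π ^ 2 - 4 * (π * x - x ^ 2) := by ring
  linear_combination (-4 : ℝ) * mul_nivenFun n x - nivenFun n x * hsq

theorem integral_nivenFun_mul_sin_succ_succ (n : ℕ) :
    ∫ x in (0:ℝ)..π, nivenFun (n + 2) x * sin x =
      (4 * n + 6) * (∫ x in (0:ℝ)..π, nivenFun (n + 1) x * sin x) -
        π ^ 2 * ∫ x in (0:ℝ)..π, nivenFun n x * sin x := by
  have hparts := integral_add_integral_deriv2_mul_sin (hasDerivAt_nivenFun_succ (n + 1))
    (hasDerivAt_deriv_nivenFun_succ_succ n)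
    ((continuous_const.mul (continuous_nivenFun n)).sub
      (continuous_const.mul (continuous_nivenFun (n + 1))))
  have hint : ∀ k, IntervalIntegrable (fun x => nivenFun k x * sin x) MeasureTheory.volume 0 π :=
    fun k => ((continuous_nivenFun k).mul continuous_sin).intervalIntegrable _ _
  simp only [sub_mul, mul_assoc] at hparts
  rw [integral_sub ((hint n).const_mul _) ((hint (n + 1)).const_mul _), integral_const_mul,
    integral_const_mul, nivenFun_succ_pi, nivenFun_succ_zero] at hparts
  linarith

theorem integral_nivenFun_one_mul_sin : ∫ x in (0:ℝ)..π, nivenFun 1 x * sin x = 4 := by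
  have hparts := integral_add_integral_deriv2_mul_sin
    (fun x => by simpa using hasDerivAt_nivenFun_succ 0 x) hasDerivAt_pi_sub_two_mul
    continuous_const
  rw [integral_const_mul, integral_sin] at hparts
  simp only [nivenFun_succ_pi, nivenFun_succ_zero, cos_pi, cos_zero] at hparts
  linarith

theorem stmt_9 (I : ℕ → ℝ)
    (hI : ∀ n : ℕ, I n = ∫ x in (0:ℝ)..Real.pi,
      (Real.pi * x - x ^ 2) ^ n / (n.factorial : ℝ) * Real.sin x) :
    I 0 = 2 ∧ I 1 = 4 ∧
    (∀ n : ℕ, 2 ≤ n → I n = (4 * (n : ℝ) - 2) * I (n - 1) - Real.pi ^ 2 * I (n - 2)) ∧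
    (∀ n : ℕ, ∃ P : Polynomial ℤ, I n = Polynomial.aeval (Real.pi ^ 2) P) := by
  have hIf : ∀ n, I n = ∫ x in (0:ℝ)..π, nivenFun n x * sin x := hI
  have h0 : I 0 = 2 := by norm_num [hIf, integral_sin]
  have h1 : I 1 = 4 := by rw [hIf, integral_nivenFun_one_mul_sin]
  have hrec : ∀ n, I (n + 2) = (4 * n + 6 : ℤ) * I (n + 1) - π ^ 2 * I n := fun n => by
    rw [hIf, hIf, hIf, integral_nivenFun_mul_sin_succ_succ]
    push_cast
    ring
  refine ⟨h0, h1, fun n hn => ?_, fun n => ?_⟩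
  · obtain ⟨m, rfl⟩ := Nat.exists_eq_add_of_le' hn
    rw [hrec, Nat.add_sub_cancel, show m + 2 - 1 = m + 1 by omega]
    push_cast
    ring
  · obtain ⟨P, hP⟩ := mem_range_aeval_of_recurrence (π ^ 2) _ I
      ⟨2, by simp [h0, map_ofNat]⟩ ⟨4, by simp [h1, map_ofNat]⟩ hrec n
    exact ⟨P, hP.symm⟩
end

section
/- For every nonzero rational number r, e^r is irrational. -/
/-!
Since `e ^ num r = (e ^ r) ^ den r`, it suffices to treat a nonzero integer exponent `m`. The
analytic part of the Lindemann–Weierstrass theorem (Hermite's integrals for `X - m`) provides, for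
every large prime `p`, integers `n` with `p ∤ n` and `g` with `|n e ^ m - p g| ≤ c ^ p / (p - 1)!`.
If `e ^ m = a / b`, then `b (n e ^ m - p g) = n a - p b g` is an integer which is not divisible by
`p` once `p > |a|`, hence nonzero, yet it has absolute value `< 1` for `p` large.
-/

open Polynomial Filter Topology
open scoped Nat

theorem tendsto_pow_div_factorial_pred_atTop {K : Type*} [Field K] [LinearOrder K]
    [IsStrictOrderedRing K] [FloorSemiring K] [TopologicalSpace K] [OrderTopology K] (c : K) :
    Tendsto (fun p : ℕ => c ^ p / (p - 1)!) atTop (𝓝 0) := by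
  have h := (FloorSemiring.tendsto_pow_div_factorial_atTop c).const_mul c
  rw [mul_zero] at h
  refine (h.comp (tendsto_sub_atTop_nat 1)).congr' ?_
  filter_upwards [eventually_ge_atTop 1] with p hp
  rw [Function.comp_apply, ← mul_div_assoc, ← pow_succ', Nat.sub_add_cancel hp]

theorem irrational_exp_intCast {m : ℤ} (hm : m ≠ 0) : Irrational (Real.exp m) := by
  rintro ⟨q, hq⟩
  have hnum_pos : 0 < q.num := Rat.num_pos.2 (by exact_mod_cast hq ▸ Real.exp_pos m)
  have hnum : (q.num : ℂ) = q.den * Complex.exp m := by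
    rw [← Complex.ofReal_intCast m, ← Complex.ofReal_exp, ← hq]
    exact_mod_cast (Rat.den_mul_eq_num q).symm
  obtain ⟨c, hc⟩ := LindemannWeierstrass.exp_polynomial_approx (X - C m) (by simpa using hm)
  obtain ⟨N, hN⟩ := eventually_atTop.1 <|
    ((tendsto_pow_div_factorial_pred_atTop c).const_mul (q.den : ℝ)).eventually_lt_const
      (by simp : (q.den : ℝ) * 0 < 1)
  obtain ⟨p, hp, hprime⟩ :=
    Nat.exists_infinite_primes (max N (max (m.natAbs + 1) (q.num.natAbs + 1)))
  obtain ⟨n, hn, g, -, happrox⟩ := hc p (by simp; omega) hprime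
  specialize happrox (r := m) (by rw [aroots_X_sub_C]; simp)
  have hcast : ((n * q.num - p * q.den * g.eval m : ℤ) : ℂ)
      = q.den * (n • Complex.exp m - p • aeval (m : ℂ) g) := by
    have haeval : aeval (m : ℂ) g = g.eval m := by
      simpa using aeval_algebraMap_apply_eq_algebraMap_eval (A := ℂ) m g
    simp only [Int.cast_sub, Int.cast_mul, Int.cast_natCast, hnum, haeval, zsmul_eq_mul,
      nsmul_eq_mul]
    ring
  have hzero : n * q.num - p * q.den * g.eval m = 0 := by
    rw [← Int.abs_lt_one_iff, ← Int.cast_lt (R := ℝ), Int.cast_abs, ← Complex.norm_intCast, hcast,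
      norm_mul, Complex.norm_natCast, Int.cast_one]
    exact (mul_le_mul_of_nonneg_left happrox (by positivity)).trans_lt (hN p (by omega))
  have hdvd : (p : ℤ) ∣ n * q.num := ⟨q.den * g.eval m, by linear_combination hzero⟩
  rcases Int.Prime.dvd_mul' hprime hdvd with h | h
  · exact hn h
  · have hle := Int.le_of_dvd hnum_pos h
    omega

theorem stmt_11 (r : ℚ) (hr : r ≠ 0) : Irrational (Real.exp r) := by
  have hpow : Real.exp r ^ r.den = Real.exp r.num := by
    rw [← Real.exp_nat_mul]
    exact_mod_cast congrArg (fun x : ℚ => Real.exp x) (Rat.den_mul_eq_num r)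
  exact (hpow ▸ irrational_exp_intCast (Rat.num_ne_zero.2 hr)).of_pow r.den
end

section
/- For a real number r and n ≥ 1, with f_n(z) = (r²z² - z⁴)ⁿ/n!, the four integrals I_n = ∫₀ʳ f_n sin(r-z) dz, J_n = ∫₀ʳ z f_n cos(r-z) dz, K_n = ∫₀ʳ z² f_n sin(r-z) dz, L_n = ∫₀ʳ z³ f_n cos(r-z) dz satisfy: I_n = 4L_{n-1} - 2r²J_{n-1}, J_n = (4n+1)I_n - 2r²K_{n-1}, K_n = -(4n+2)J_n + 2r²L_{n-1}, and L_n = (4n+3)K_n + 2n r² I_n - 2r⁴ K_{n-1}. -/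
/-!
Every relation is one integration by parts on `[0, r]`: the boundary terms vanish because
`f (n + 1)` vanishes at `0` and at `r`, and `f (n + 1)' = (2 r² z - 4 z³) f n`. The factor `z⁴`
produced by the derivative is then traded for lower powers through
`z⁴ f n = r² z² f n - (n + 1) f (n + 1)`, which is where the coefficients `4 n + j` come from.
-/

open Real intervalIntegral
open MeasureTheory (volume)
open scoped Nat

namespace QuarticMoment

noncomputable def f (r : ℝ) (n : ℕ) (z : ℝ) : ℝ := (r ^ 2 * z ^ 2 - z ^ 4) ^ n / n !

noncomputable def moment (r : ℝ) (w : ℝ → ℝ) (k n : ℕ) : ℝ :=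
  ∫ z in (0 : ℝ)..r, z ^ k * f r n z * w z

variable {r : ℝ}

@[fun_prop]
theorem continuous_f (r : ℝ) (n : ℕ) : Continuous (f r n) := by
  unfold f; fun_prop

theorem f_succ_zero (r : ℝ) (n : ℕ) : f r (n + 1) 0 = 0 := by
  simp [f]

theorem f_succ_self (r : ℝ) (n : ℕ) : f r (n + 1) r = 0 := by
  simp only [f, show r ^ 2 * r ^ 2 - r ^ 4 = 0 by ring, zero_pow n.succ_ne_zero, zero_div]

theorem pow_four_mul_f (r : ℝ) (n : ℕ) (z : ℝ) :
    z ^ 4 * f r n z = r ^ 2 * (z ^ 2 * f r n z) - (n + 1) * f r (n + 1) z := by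
  simp only [f, Nat.factorial_succ, Nat.cast_mul, pow_succ _ n]
  field_simp
  push_cast
  ring

theorem hasDerivAt_f_succ (r : ℝ) (n : ℕ) (z : ℝ) :
    HasDerivAt (f r (n + 1)) ((2 * r ^ 2 * z - 4 * z ^ 3) * f r n z) z := by
  have hg : HasDerivAt (fun z : ℝ => r ^ 2 * z ^ 2 - z ^ 4) (2 * r ^ 2 * z - 4 * z ^ 3) z := by
    refine (((hasDerivAt_pow 2 z).const_mul (r ^ 2)).sub (hasDerivAt_pow 4 z)).congr_deriv ?_
    push_cast
    ring
  refine ((hg.pow (n + 1)).div_const ((n + 1)! : ℝ)).congr_deriv ?_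
  simp only [f, Nat.factorial_succ, Nat.cast_mul, Nat.add_sub_cancel]
  field_simp

theorem moment_neg (r : ℝ) (w : ℝ → ℝ) (k n : ℕ) :
    moment r (fun z => -w z) k n = -moment r w k n := by
  simp only [moment, mul_neg, integral_neg]

theorem intervalIntegrable_moment {w : ℝ → ℝ} (hw : IntervalIntegrable w volume 0 r)
    (k n : ℕ) :
    IntervalIntegrable (fun z => z ^ k * f r n z * w z) volume 0 r :=
  hw.continuousOn_mul (by fun_prop)

theorem moment_add_four {w : ℝ → ℝ} (hw : IntervalIntegrable w volume 0 r) (k n : ℕ) :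
    moment r w (k + 4) n = r ^ 2 * moment r w (k + 2) n - (n + 1) * moment r w k (n + 1) := by
  have hpt : ∀ z, z ^ (k + 4) * f r n z * w z
      = r ^ 2 * (z ^ (k + 2) * f r n z * w z) - (n + 1) * (z ^ k * f r (n + 1) z * w z) := by
    intro z
    linear_combination z ^ k * w z * pow_four_mul_f r n z
  simp only [moment, hpt]
  rw [integral_sub ((intervalIntegrable_moment hw _ _).const_mul _)
    ((intervalIntegrable_moment hw _ _).const_mul _), integral_const_mul, integral_const_mul]

/-- At `k = 0` the truncated `k - 1` is harmless: its coefficient is `0`. -/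
theorem moment_succ_eq_of_hasDerivAt {W w : ℝ → ℝ}
    (hW : ∀ z ∈ Set.uIcc 0 r, HasDerivAt W (w z) z) (hw : IntervalIntegrable w volume 0 r)
    (k n : ℕ) :
    moment r w k (n + 1) = -k * moment r W (k - 1) (n + 1) - 2 * r ^ 2 * moment r W (k + 1) n
      + 4 * moment r W (k + 3) n := by
  have hWi : IntervalIntegrable W volume 0 r :=
    ContinuousOn.intervalIntegrable fun z hz => (hW z hz).continuousAt.continuousWithinAt
  have ibp := integral_mul_deriv_eq_deriv_mul
    (fun z _ => (hasDerivAt_pow k z).mul (hasDerivAt_f_succ r n z)) hW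
    (Continuous.intervalIntegrable (by fun_prop) _ _) hw
  have hpt : ∀ z,
      (k * z ^ (k - 1) * f r (n + 1) z + z ^ k * ((2 * r ^ 2 * z - 4 * z ^ 3) * f r n z)) * W z
        = k * (z ^ (k - 1) * f r (n + 1) z * W z) + 2 * r ^ 2 * (z ^ (k + 1) * f r n z * W z)
          - 4 * (z ^ (k + 3) * f r n z * W z) := by
    intro z; ring
  simp only [hpt, Pi.mul_apply, f_succ_zero, f_succ_self, mul_zero, zero_mul, sub_zero] at ibp
  rw [integral_sub (((intervalIntegrable_moment hWi _ _).const_mul _).add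
      ((intervalIntegrable_moment hWi _ _).const_mul _))
      ((intervalIntegrable_moment hWi _ _).const_mul _),
    integral_add ((intervalIntegrable_moment hWi _ _).const_mul _)
      ((intervalIntegrable_moment hWi _ _).const_mul _),
    integral_const_mul, integral_const_mul,
    integral_const_mul] at ibp
  simp only [moment]
  linarith

theorem hasDerivAt_cos_sub (r z : ℝ) : HasDerivAt (fun z => cos (r - z)) (sin (r - z)) z := by
  simpa using ((hasDerivAt_id z).const_sub r).cos

theorem hasDerivAt_neg_sin_sub (r z : ℝ) :
    HasDerivAt (fun z => -sin (r - z)) (cos (r - z)) z := by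
  simpa using ((hasDerivAt_id z).const_sub r).sin.fun_neg

end QuarticMoment

open QuarticMoment

theorem stmt_12 (r : ℝ) (I J K L : ℕ → ℝ)
    (hI : ∀ n : ℕ, I n = ∫ z in (0:ℝ)..r,
      (r ^ 2 * z ^ 2 - z ^ 4) ^ n / (n.factorial : ℝ) * Real.sin (r - z))
    (hJ : ∀ n : ℕ, J n = ∫ z in (0:ℝ)..r,
      z * ((r ^ 2 * z ^ 2 - z ^ 4) ^ n / (n.factorial : ℝ)) * Real.cos (r - z))
    (hK : ∀ n : ℕ, K n = ∫ z in (0:ℝ)..r,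
      z ^ 2 * ((r ^ 2 * z ^ 2 - z ^ 4) ^ n / (n.factorial : ℝ)) * Real.sin (r - z))
    (hL : ∀ n : ℕ, L n = ∫ z in (0:ℝ)..r,
      z ^ 3 * ((r ^ 2 * z ^ 2 - z ^ 4) ^ n / (n.factorial : ℝ)) * Real.cos (r - z))
    (n : ℕ) (hn : 1 ≤ n) :
    I n = 4 * L (n - 1) - 2 * r ^ 2 * J (n - 1) ∧
    J n = (4 * (n : ℝ) + 1) * I n - 2 * r ^ 2 * K (n - 1) ∧
    K n = -(4 * (n : ℝ) + 2) * J n + 2 * r ^ 2 * L (n - 1) ∧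
    L n = (4 * (n : ℝ) + 3) * K n + 2 * (n : ℝ) * r ^ 2 * I n - 2 * r ^ 4 * K (n - 1) := by
  obtain ⟨m, rfl⟩ := Nat.exists_eq_add_of_le' hn
  set S : ℝ → ℝ := fun z => sin (r - z)
  set C : ℝ → ℝ := fun z => cos (r - z)
  have eI : ∀ n, I n = moment r S 0 n := fun n => by simp [hI, moment, f, S]
  have eJ : ∀ n, J n = moment r C 1 n := fun n => by simp [hJ, moment, f, C]
  have eK : ∀ n, K n = moment r S 2 n := fun n => hK n
  have eL : ∀ n, L n = moment r C 3 n := fun n => hL n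
  have dC : ∀ z ∈ Set.uIcc 0 r, HasDerivAt C (S z) z := fun z _ => hasDerivAt_cos_sub r z
  have dS : ∀ z ∈ Set.uIcc 0 r, HasDerivAt (fun z => -S z) (C z) z :=
    fun z _ => hasDerivAt_neg_sin_sub r z
  have iS : IntervalIntegrable S volume 0 r := (by fun_prop : Continuous S).intervalIntegrable _ _
  have iC : IntervalIntegrable C volume 0 r := (by fun_prop : Continuous C).intervalIntegrable _ _
  have ibp0 := moment_succ_eq_of_hasDerivAt dC iS 0 m
  have ibp1 := moment_succ_eq_of_hasDerivAt dS iC 1 m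
  have ibp2 := moment_succ_eq_of_hasDerivAt dC iS 2 m
  have ibp3 := moment_succ_eq_of_hasDerivAt dS iC 3 m
  have red0 := moment_add_four iS 0 m
  have red1 := moment_add_four iC 1 m
  have red2 := moment_add_four iS 2 m
  simp only [moment_neg] at ibp1 ibp3
  simp only [eI, eJ, eK, eL, Nat.add_sub_cancel, Nat.cast_add, Nat.cast_one]
  exact ⟨by linear_combination ibp0, by linear_combination ibp1 - 4 * red0,
    by linear_combination ibp2 + 4 * red1,
    by linear_combination ibp3 - 4 * red2 - 2 * r ^ 2 * red0⟩
end

section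
/- For each n ≥ 0 there exist polynomials u_n, v_n with integer coefficients and degrees at most 2n+1 such that I_n = u_n(r²) + v_n(r²)·cos r, where I_n = ∫₀ʳ (r²z² - z⁴)ⁿ/n! · sin(r-z) dz; and the analogous statement holds for J_n, K_n, L_n. -/
/-!
Write `f n z = (r²z² - z⁴)ⁿ / n!`. Integrating by parts against `cos (r - z)` and
`sin (r - z)`, with `f (n+1)' = (2r²z - 4z³) f n`, `(r²z² - z⁴) f n = (n + 1) f (n+1)` and
`f (n+1) 0 = f (n+1) r = 0`, expresses `I (n+1)`, `J (n+1)`, `K (n+1)`, `L (n+1)` through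
`I n`, `J n`, `K n`, `L n` and each other with coefficients in `ℤ[r²]`, raising the degree in
`r²` by at most two per step. The base integrals are `I 0 = J 0 = 1 - cos r`,
`K 0 = r² - 2 J 0` and `L 0 = 3 K 0`.
-/

open Real intervalIntegral Polynomial

theorem integral_deriv_mul_cos_sub {F F' : ℝ → ℝ} (hF : ∀ z, HasDerivAt F (F' z) z)
    (hF' : Continuous F') (r : ℝ) :
    ∫ z in 0..r, F' z * cos (r - z) = F r - F 0 * cos r - ∫ z in 0..r, F z * sin (r - z) := by
  have hFc : Continuous F := continuous_iff_continuousAt.2 fun z => (hF z).continuousAt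
  have key : (∫ z in 0..r, F' z * cos (r - z)) + ∫ z in 0..r, F z * sin (r - z) =
      F r * cos (r - r) - F 0 * cos (r - 0) := by
    rw [← integral_add ((by fun_prop : Continuous _).intervalIntegrable 0 r)
      ((by fun_prop : Continuous _).intervalIntegrable 0 r)]
    refine integral_deriv_mul_eq_sub (fun z _ => hF z) (fun z _ => ?_)
      (hF'.intervalIntegrable 0 r) ((by fun_prop : Continuous _).intervalIntegrable 0 r)
    simpa using ((hasDerivAt_id z).const_sub r).cos
  simp only [sub_self, cos_zero, sub_zero, mul_one] at key
  linarith

theorem integral_deriv_mul_sin_sub {F F' : ℝ → ℝ} (hF : ∀ z, HasDerivAt F (F' z) z)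
    (hF' : Continuous F') (r : ℝ) :
    ∫ z in 0..r, F' z * sin (r - z) = (∫ z in 0..r, F z * cos (r - z)) - F 0 * sin r := by
  have hFc : Continuous F := continuous_iff_continuousAt.2 fun z => (hF z).continuousAt
  have key : (∫ z in 0..r, F' z * sin (r - z)) + ∫ z in 0..r, F z * -cos (r - z) =
      F r * sin (r - r) - F 0 * sin (r - 0) := by
    rw [← integral_add ((by fun_prop : Continuous _).intervalIntegrable 0 r)
      ((by fun_prop : Continuous _).intervalIntegrable 0 r)]
    refine integral_deriv_mul_eq_sub (fun z _ => hF z) (fun z _ => ?_)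
      (hF'.intervalIntegrable 0 r) ((by fun_prop : Continuous _).intervalIntegrable 0 r)
    simpa using ((hasDerivAt_id z).const_sub r).sin
  simp only [mul_neg, integral_neg, sub_self, sin_zero, mul_zero, sub_zero] at key
  linarith

def HasPolyCosForm (r : ℝ) (d : ℕ) (x : ℝ) : Prop :=
  ∃ u v : ℤ[X], u.natDegree ≤ d ∧ v.natDegree ≤ d ∧
    x = aeval (r ^ 2) u + aeval (r ^ 2) v * cos r

namespace HasPolyCosForm

variable {r x y : ℝ} {d : ℕ}

theorem one : HasPolyCosForm r 0 1 := ⟨1, 0, by simp, by simp, by simp⟩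

theorem cos : HasPolyCosForm r 0 (cos r) := ⟨0, 1, by simp, by simp, by simp⟩

theorem mono {e : ℕ} (h : HasPolyCosForm r d x) (hde : d ≤ e) : HasPolyCosForm r e x :=
  let ⟨u, v, hu, hv, hx⟩ := h
  ⟨u, v, hu.trans hde, hv.trans hde, hx⟩

theorem add (hx : HasPolyCosForm r d x) (hy : HasPolyCosForm r d y) :
    HasPolyCosForm r d (x + y) := by
  obtain ⟨u, v, hu, hv, rfl⟩ := hx
  obtain ⟨u', v', hu', hv', rfl⟩ := hy
  exact ⟨u + u', v + v', natDegree_add_le_of_degree_le hu hu',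
    natDegree_add_le_of_degree_le hv hv', by simp only [map_add]; ring⟩

theorem intCast_mul (c : ℤ) (hx : HasPolyCosForm r d x) : HasPolyCosForm r d (c * x) := by
  obtain ⟨u, v, hu, hv, rfl⟩ := hx
  exact ⟨C c * u, C c * v, (natDegree_C_mul_le c u).trans hu,
    (natDegree_C_mul_le c v).trans hv, by
      simp only [map_mul, aeval_C, algebraMap_int_eq, Int.coe_castRingHom]; ring⟩

theorem sq_mul (hx : HasPolyCosForm r d x) : HasPolyCosForm r (d + 1) (r ^ 2 * x) := by
  obtain ⟨u, v, hu, hv, rfl⟩ := hx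
  exact ⟨u * X, v * X, natDegree_mul_le_of_le hu natDegree_X_le,
    natDegree_mul_le_of_le hv natDegree_X_le, by simp only [map_mul, aeval_X]; ring⟩

end HasPolyCosForm

namespace FourIntegrals

noncomputable def f (r : ℝ) (n : ℕ) (z : ℝ) : ℝ := (r ^ 2 * z ^ 2 - z ^ 4) ^ n / n.factorial

noncomputable def I (r : ℝ) (n : ℕ) : ℝ := ∫ z in 0..r, f r n z * sin (r - z)
noncomputable def J (r : ℝ) (n : ℕ) : ℝ := ∫ z in 0..r, z * f r n z * cos (r - z)
noncomputable def K (r : ℝ) (n : ℕ) : ℝ := ∫ z in 0..r, z ^ 2 * f r n z * sin (r - z)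
noncomputable def L (r : ℝ) (n : ℕ) : ℝ := ∫ z in 0..r, z ^ 3 * f r n z * cos (r - z)

variable (r : ℝ) (m : ℕ)

@[fun_prop]
theorem continuous_f (n : ℕ) : Continuous (f r n) := by
  unfold f; fun_prop

theorem f_zero (z : ℝ) : f r 0 z = 1 := by simp [f]

theorem f_succ_at_zero : f r (m + 1) 0 = 0 := by simp [f]

theorem f_succ_at_self : f r (m + 1) r = 0 := by
  rw [f, show r ^ 2 * r ^ 2 - r ^ 4 = 0 by ring]
  simp

theorem sub_mul_f (z : ℝ) : (r ^ 2 * z ^ 2 - z ^ 4) * f r m z = (m + 1) * f r (m + 1) z := by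
  simp only [f, Nat.factorial_succ, pow_succ, Nat.cast_mul]
  field_simp
  push_cast
  ring

theorem hasDerivAt_f_succ (z : ℝ) :
    HasDerivAt (f r (m + 1)) (2 * r ^ 2 * (z * f r m z) - 4 * (z ^ 3 * f r m z)) z := by
  have hp : HasDerivAt (fun z => r ^ 2 * z ^ 2 - z ^ 4) (2 * r ^ 2 * z - 4 * z ^ 3) z := by
    refine (((hasDerivAt_pow 2 z).const_mul (r ^ 2)).fun_sub (hasDerivAt_pow 4 z)).congr_deriv ?_
    norm_num
    ring
  refine ((hp.fun_pow (m + 1)).div_const ((m + 1).factorial : ℝ)).congr_deriv ?_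
  simp only [f, Nat.factorial_succ, Nat.cast_mul, Nat.add_sub_cancel]
  field_simp

theorem hasDerivAt_pow_succ_mul_f (k : ℕ) (z : ℝ) :
    HasDerivAt (fun z => z ^ (k + 1) * f r (m + 1) z)
      ((k + 4 * m + 5) * (z ^ k * f r (m + 1) z) - 2 * r ^ 2 * (z ^ (k + 2) * f r m z)) z := by
  refine ((hasDerivAt_pow (k + 1) z).mul (hasDerivAt_f_succ r m z)).congr_deriv ?_
  simp only [Nat.add_sub_cancel]
  push_cast
  linear_combination (4 * z ^ k) * sub_mul_f r m z

theorem I_zero : I r 0 = 1 - cos r := by simp [I, f_zero]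

theorem J_zero : J r 0 = I r 0 := by
  have h := integral_deriv_mul_sin_sub (F' := fun _ => 1) hasDerivAt_id' continuous_const r
  simp only [I, J, f_zero, mul_one, one_mul, zero_mul, sub_zero] at h ⊢
  exact h.symm

theorem K_zero : K r 0 = r ^ 2 - 2 * J r 0 := by
  have h := integral_deriv_mul_cos_sub (F' := fun z => 2 * z)
    (fun z => by simpa using hasDerivAt_pow 2 z) (by fun_prop) r
  simp only [mul_assoc, integral_const_mul, ne_eq, OfNat.ofNat_ne_zero, not_false_eq_true,
    zero_pow, zero_mul, sub_zero] at h
  simp only [J, K, f_zero, mul_one]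
  linear_combination h

theorem L_zero : L r 0 = 3 * K r 0 := by
  have h := integral_deriv_mul_sin_sub (F' := fun z => 3 * z ^ 2)
    (fun z => by simpa using hasDerivAt_pow 3 z) (by fun_prop) r
  simp only [mul_assoc, integral_const_mul, ne_eq, OfNat.ofNat_ne_zero, not_false_eq_true,
    zero_pow, zero_mul, sub_zero] at h
  simp only [K, L, f_zero, mul_one]
  linear_combination -h

theorem I_succ : I r (m + 1) = 4 * L r m - 2 * r ^ 2 * J r m := by
  have h := integral_deriv_mul_cos_sub (hasDerivAt_f_succ r m) (by fun_prop) r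
  simp (disch := exact (Continuous.intervalIntegrable (by fun_prop) _ _)) only
    [f_succ_at_zero, f_succ_at_self, sub_mul, mul_assoc, integral_sub, integral_const_mul] at h
  simp only [I, J, L, mul_assoc]
  linear_combination h

theorem J_succ : J r (m + 1) = (4 * m + 5) * I r (m + 1) - 2 * r ^ 2 * K r m := by
  have h := integral_deriv_mul_sin_sub (hasDerivAt_pow_succ_mul_f r m 0) (by fun_prop) r
  simp (disch := exact (Continuous.intervalIntegrable (by fun_prop) _ _)) only
    [f_succ_at_zero, sub_mul, mul_assoc, integral_sub, integral_const_mul, Nat.cast_zero, zero_add,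
      pow_zero, pow_one, one_mul, mul_zero] at h
  simp only [I, J, K, mul_assoc]
  linear_combination -h

theorem K_succ : K r (m + 1) = 2 * r ^ 2 * L r m - (4 * m + 6) * J r (m + 1) := by
  have h := integral_deriv_mul_cos_sub (hasDerivAt_pow_succ_mul_f r m 1) (by fun_prop) r
  simp (disch := exact (Continuous.intervalIntegrable (by fun_prop) _ _)) only
    [f_succ_at_zero, f_succ_at_self, sub_mul, mul_assoc, integral_sub, integral_const_mul,
      Nat.cast_one, Nat.reduceAdd, pow_one, mul_zero, zero_mul, sub_zero] at h
  simp only [J, K, L, mul_assoc]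
  linear_combination h

theorem L_succ : L r (m + 1) =
    (4 * m + 7) * K r (m + 1) + 2 * (m + 1) * r ^ 2 * I r (m + 1) - 2 * r ^ 4 * K r m := by
  have h := integral_deriv_mul_sin_sub (hasDerivAt_pow_succ_mul_f r m 2) (by fun_prop) r
  simp (disch := exact (Continuous.intervalIntegrable (by fun_prop) _ _)) only
    [f_succ_at_zero, sub_mul, mul_assoc, integral_sub, integral_const_mul, Nat.cast_ofNat,
      Nat.reduceAdd, mul_zero, zero_mul, sub_zero] at h
  have h4 : ∫ z in 0..r, z ^ 4 * (f r m z * sin (r - z)) =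
      r ^ 2 * K r m - (m + 1) * I r (m + 1) := by
    simp (disch := exact (Continuous.intervalIntegrable (by fun_prop) _ _)) only
      [I, K, ← integral_const_mul, ← integral_sub]
    congr with z
    linear_combination (-sin (r - z)) * sub_mul_f r m z
  simp only [I, K, L, mul_assoc] at h4 ⊢
  linear_combination -h - 2 * r ^ 2 * h4

def PolyCosForms (d n : ℕ) : Prop :=
  HasPolyCosForm r d (I r n) ∧ HasPolyCosForm r d (J r n) ∧
    HasPolyCosForm r d (K r n) ∧ HasPolyCosForm r d (L r n)

theorem polyCosForms_zero : PolyCosForms r 1 0 := by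
  have hI : HasPolyCosForm r 1 (I r 0) := by
    rw [I_zero]
    convert (HasPolyCosForm.one.add (HasPolyCosForm.cos.intCast_mul (-1))).mono zero_le_one
      using 1
    push_cast; ring
  have hJ : HasPolyCosForm r 1 (J r 0) := J_zero r ▸ hI
  have hK : HasPolyCosForm r 1 (K r 0) := by
    rw [K_zero]
    convert HasPolyCosForm.one.sq_mul.add (hJ.intCast_mul (-2)) using 1
    push_cast; ring
  have hL : HasPolyCosForm r 1 (L r 0) := by
    rw [L_zero]
    exact_mod_cast hK.intCast_mul 3
  exact ⟨hI, hJ, hK, hL⟩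

theorem polyCosForms_succ (h : PolyCosForms r (2 * m + 1) m) :
    PolyCosForms r (2 * m + 3) (m + 1) := by
  obtain ⟨hI, hJ, hK, hL⟩ := h
  have hI' : HasPolyCosForm r (2 * m + 2) (I r (m + 1)) := by
    rw [I_succ]
    convert ((hL.intCast_mul 4).mono (by omega)).add (hJ.sq_mul.intCast_mul (-2)) using 1
    push_cast; ring
  have hJ' : HasPolyCosForm r (2 * m + 2) (J r (m + 1)) := by
    rw [J_succ]
    convert (hI'.intCast_mul (4 * m + 5)).add (hK.sq_mul.intCast_mul (-2)) using 1
    push_cast; ring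
  have hK' : HasPolyCosForm r (2 * m + 2) (K r (m + 1)) := by
    rw [K_succ]
    convert (hL.sq_mul.intCast_mul 2).add (hJ'.intCast_mul (-(4 * m + 6))) using 1
    push_cast; ring
  have hL' : HasPolyCosForm r (2 * m + 3) (L r (m + 1)) := by
    rw [L_succ]
    convert (((hK'.intCast_mul (4 * m + 7)).mono (by omega)).add
      (hI'.intCast_mul (2 * (m + 1))).sq_mul).add (hK.sq_mul.sq_mul.intCast_mul (-2)) using 1
    push_cast; ring
  exact ⟨hI'.mono (by omega), hJ'.mono (by omega), hK'.mono (by omega), hL'⟩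

theorem polyCosForms (n : ℕ) : PolyCosForms r (2 * n + 1) n := by
  induction n with
  | zero => exact polyCosForms_zero r
  | succ m ih => exact polyCosForms_succ r m ih

end FourIntegrals

theorem stmt_14 (r : ℝ) (I J K L : ℕ → ℝ)
    (hI : ∀ n : ℕ, I n = ∫ z in (0:ℝ)..r,
      (r ^ 2 * z ^ 2 - z ^ 4) ^ n / (n.factorial : ℝ) * Real.sin (r - z))
    (hJ : ∀ n : ℕ, J n = ∫ z in (0:ℝ)..r,
      z * ((r ^ 2 * z ^ 2 - z ^ 4) ^ n / (n.factorial : ℝ)) * Real.cos (r - z))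
    (hK : ∀ n : ℕ, K n = ∫ z in (0:ℝ)..r,
      z ^ 2 * ((r ^ 2 * z ^ 2 - z ^ 4) ^ n / (n.factorial : ℝ)) * Real.sin (r - z))
    (hL : ∀ n : ℕ, L n = ∫ z in (0:ℝ)..r,
      z ^ 3 * ((r ^ 2 * z ^ 2 - z ^ 4) ^ n / (n.factorial : ℝ)) * Real.cos (r - z)) :
    ∀ n : ℕ, ∀ A ∈ ({I, J, K, L} : Set (ℕ → ℝ)),
      ∃ u v : Polynomial ℤ, u.natDegree ≤ 2 * n + 1 ∧ v.natDegree ≤ 2 * n + 1 ∧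
        A n = Polynomial.aeval (r ^ 2) u + Polynomial.aeval (r ^ 2) v * Real.cos r := by
  intro n A hA
  obtain ⟨hIn, hJn, hKn, hLn⟩ := FourIntegrals.polyCosForms r n
  simp only [Set.mem_insert_iff, Set.mem_singleton_iff] at hA
  rcases hA with rfl | rfl | rfl | rfl
  · rw [hI n]; exact hIn
  · rw [hJ n]; exact hJn
  · rw [hK n]; exact hKn
  · rw [hL n]; exact hLn
end

section
/- If r ≠ 0, then it is impossible that I_n, J_n, K_n, L_n are all zero for all n ≥ 0; in fact 2I_0 + K_0 = r². -/
open Real intervalIntegral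

/- Integrating by parts twice: `z ^ 2 * cos (r - z) + 2 * z * sin (r - z)` is an antiderivative
of `(2 + z ^ 2) * sin (r - z)`, so `2 * I 0 + K 0 = r ^ 2`, which cannot vanish for `r ≠ 0`. -/

lemma hasDerivAt_sq_mul_cos_sub_add_mul_sin_sub (r z : ℝ) :
    HasDerivAt (fun z => z ^ 2 * cos (r - z) + 2 * z * sin (r - z))
      ((2 + z ^ 2) * sin (r - z)) z := by
  have hsub : HasDerivAt (fun z : ℝ => r - z) (-1) z := by
    simpa using (hasDerivAt_id z).const_sub r
  have hcos : HasDerivAt (fun z => cos (r - z)) (sin (r - z)) z := by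
    simpa using hsub.cos
  have hsin : HasDerivAt (fun z => sin (r - z)) (-cos (r - z)) z := by
    simpa using hsub.sin
  refine (((hasDerivAt_pow 2 z).fun_mul hcos).fun_add
    (((hasDerivAt_id' z).const_mul 2).fun_mul hsin)).congr_deriv ?_
  push_cast
  ring

lemma integral_two_add_sq_mul_sin_sub (r : ℝ) :
    ∫ z in (0 : ℝ)..r, (2 + z ^ 2) * sin (r - z) = r ^ 2 := by
  rw [integral_eq_sub_of_hasDerivAt
    (fun z _ => hasDerivAt_sq_mul_cos_sub_add_mul_sin_sub r z)
    (Continuous.intervalIntegrable (by fun_prop) _ _)]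
  simp

theorem stmt_15_general (r : ℝ) (hr : r ≠ 0) (I J K L : ℕ → ℝ)
    (hI : ∀ n : ℕ, I n = ∫ z in (0:ℝ)..r,
      (r ^ 2 * z ^ 2 - z ^ 4) ^ n / (n.factorial : ℝ) * Real.sin (r - z))
    (hK : ∀ n : ℕ, K n = ∫ z in (0:ℝ)..r,
      z ^ 2 * ((r ^ 2 * z ^ 2 - z ^ 4) ^ n / (n.factorial : ℝ)) * Real.sin (r - z)) :
    (¬ ∀ n : ℕ, I n = 0 ∧ J n = 0 ∧ K n = 0 ∧ L n = 0) ∧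
    2 * I 0 + K 0 = r ^ 2 := by
  have key : 2 * I 0 + K 0 = r ^ 2 := by
    rw [hI, hK, ← integral_two_add_sq_mul_sin_sub r, ← integral_const_mul,
      ← integral_add (Continuous.intervalIntegrable (by fun_prop) _ _)
        (Continuous.intervalIntegrable (by fun_prop) _ _)]
    congr 1 with z
    simp only [pow_zero, Nat.factorial_zero, Nat.cast_one, div_one]
    ring
  refine ⟨fun hall => ?_, key⟩
  obtain ⟨hI0, -, hK0, -⟩ := hall 0
  rw [hI0, hK0] at key
  exact hr (pow_eq_zero_iff two_ne_zero |>.mp (by linarith))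

theorem stmt_15 (r : ℝ) (hr : r ≠ 0) (I J K L : ℕ → ℝ)
    (hI : ∀ n : ℕ, I n = ∫ z in (0:ℝ)..r,
      (r ^ 2 * z ^ 2 - z ^ 4) ^ n / (n.factorial : ℝ) * Real.sin (r - z))
    (hJ : ∀ n : ℕ, J n = ∫ z in (0:ℝ)..r,
      z * ((r ^ 2 * z ^ 2 - z ^ 4) ^ n / (n.factorial : ℝ)) * Real.cos (r - z))
    (hK : ∀ n : ℕ, K n = ∫ z in (0:ℝ)..r,
      z ^ 2 * ((r ^ 2 * z ^ 2 - z ^ 4) ^ n / (n.factorial : ℝ)) * Real.sin (r - z))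
    (hL : ∀ n : ℕ, L n = ∫ z in (0:ℝ)..r,
      z ^ 3 * ((r ^ 2 * z ^ 2 - z ^ 4) ^ n / (n.factorial : ℝ)) * Real.cos (r - z)) :
    (¬ ∀ n : ℕ, I n = 0 ∧ J n = 0 ∧ K n = 0 ∧ L n = 0) ∧
    2 * I 0 + K 0 = r ^ 2 :=
  stmt_15_general r hr I J K L hI hK
end
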